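/- arXiv:1301.3447 — 5 statements merged into one kernel-verified Lean document; each statement's English description precedes it below -/
import Mathlib

section
/- Let A ⊆ ℝ be open and invex with respect to η, a,b ∈ A with η(a,b) ≠ 0, f : A → ℝ three times differentiable, q ≥ 1, and |f'''|^q prequasiinvex on A (i.e., |f'''(u + t·η(v,u))|^q ≤ max{|f'''(u)|^q, |f'''(v)|^q} for all u,v ∈ A, t ∈ [0,1]). Then |∫_b^{b+η(a,b)} f(x)dx - η(a,b)·(f(b)+f(b+η(a,b)))/2 - (η(a,b)²/12)·(f'(b)-f'(b+η(a,b)))| ≤ (η(a,b)^4/192)·(max{|f'''(a)|^q, |f'''(b)|^q})^(1/q). -/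
open MeasureTheory intervalIntegral Set Real

set_option maxHeartbeats 1600000 in
theorem teo31 (A : Set ℝ) (hA : IsOpen A) (η : ℝ → ℝ → ℝ)
    (hinvex : ∀ u ∈ A, ∀ v ∈ A, ∀ t ∈ Icc (0:ℝ) 1, u + t * η v u ∈ A)
    (a b : ℝ) (ha : a ∈ A) (hb : b ∈ A) (hη : η a b ≠ 0) (f : ℝ → ℝ)
    (hf1 : ∀ x ∈ A, DifferentiableAt ℝ f x)
    (hf2 : ∀ x ∈ A, DifferentiableAt ℝ (deriv f) x)
    (hf3 : ∀ x ∈ A, DifferentiableAt ℝ (deriv (deriv f)) x)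
    (hint : IntervalIntegrable (deriv (deriv (deriv f))) volume b (b + η a b))
    (q : ℝ) (hq : 1 ≤ q)
    (hpre : ∀ u ∈ A, ∀ v ∈ A, ∀ t ∈ Icc (0:ℝ) 1,
      |deriv (deriv (deriv f)) (u + t * η v u)| ^ q
        ≤ max (|deriv (deriv (deriv f)) u| ^ q) (|deriv (deriv (deriv f)) v| ^ q)) :
    |(∫ x in b..(b + η a b), f x) - η a b * (f b + f (b + η a b)) / 2
      - ((η a b) ^ 2 / 12) * (deriv f b - deriv f (b + η a b))|
    ≤ ((η a b) ^ 4 / 192) *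
        (max (|deriv (deriv (deriv f)) a| ^ q) (|deriv (deriv (deriv f)) b| ^ q))
          ^ (1 / q) := by
  have hq0 : q ≠ 0 := by positivity
  set e := η a b with he
  set f1 := deriv f with hf1d
  set f2 := deriv (deriv f) with hf2d
  set f3 := deriv (deriv (deriv f)) with hf3d
  set M := (max (|f3 a| ^ q) (|f3 b| ^ q)) ^ (1/q) with hM
  have hmem : ∀ t ∈ Icc (0:ℝ) 1, b + t * e ∈ A := fun t ht => hinvex b hb a ha t ht
  have hlin : ∀ t : ℝ, HasDerivAt (fun s : ℝ => b + s * e) e t := fun t => by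
    simpa using ((hasDerivAt_id t).mul_const e).const_add b
  have huI : uIcc (0:ℝ) 1 = Icc (0:ℝ) 1 := uIcc_of_le zero_le_one
  -- derivatives of the composed maps
  have hg : ∀ t ∈ uIcc (0:ℝ) 1, HasDerivAt (fun s => f (b + s * e)) (f1 (b + t * e) * e) t := by
    intro t ht
    rw [huI] at ht
    exact ((hf1 _ (hmem t ht)).hasDerivAt.comp t (hlin t))
  have hg1 : ∀ t ∈ uIcc (0:ℝ) 1, HasDerivAt (fun s => f1 (b + s * e)) (f2 (b + t * e) * e) t := by
    intro t ht
    rw [huI] at ht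
    exact ((hf2 _ (hmem t ht)).hasDerivAt.comp t (hlin t))
  have hg2 : ∀ t ∈ uIcc (0:ℝ) 1, HasDerivAt (fun s => f2 (b + s * e)) (f3 (b + t * e) * e) t := by
    intro t ht
    rw [huI] at ht
    exact ((hf3 _ (hmem t ht)).hasDerivAt.comp t (hlin t))
  -- continuity
  have cg1 : ContinuousOn (fun t => f1 (b + t * e)) (uIcc (0:ℝ) 1) :=
    fun t ht => (hg1 t ht).continuousAt.continuousWithinAt
  have cg2 : ContinuousOn (fun t => f2 (b + t * e)) (uIcc (0:ℝ) 1) :=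
    fun t ht => (hg2 t ht).continuousAt.continuousWithinAt
  -- integrability of third derivative composed
  have ig3 : IntervalIntegrable (fun t => f3 (b + t * e)) volume 0 1 := by
    have h1 := (hint.comp_add_left b).comp_mul_right (c := e)
    simpa [sub_self, hη, div_self, zero_div] using h1
  -- the three integrations by parts
  have parts3 := integral_mul_deriv_eq_deriv_mul (a := (0:ℝ)) (b := 1)
      (u := fun t => t - 1/2) (u' := fun _ => (1:ℝ))
      (v := fun t => f (b + t * e)) (v' := fun t => f1 (b + t * e) * e)
      (fun x _ => (hasDerivAt_id x).sub_const _) hg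
      intervalIntegrable_const ((cg1.mul continuousOn_const).intervalIntegrable)
  have parts2 := integral_mul_deriv_eq_deriv_mul (a := (0:ℝ)) (b := 1)
      (u := fun t => (t^2 - t + 1/6)/2) (u' := fun t => t - 1/2)
      (v := fun t => f1 (b + t * e)) (v' := fun t => f2 (b + t * e) * e)
      (fun x _ => by
        have := (((hasDerivAt_pow 2 x).sub (hasDerivAt_id x)).add_const (1/6)).div_const 2
        convert this using 1
        · rfl
        norm_num; ring) hg1
      ((continuous_id.sub continuous_const).intervalIntegrable _ _)
      ((cg2.mul continuousOn_const).intervalIntegrable)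
  have parts1 := integral_mul_deriv_eq_deriv_mul (a := (0:ℝ)) (b := 1)
      (u := fun t => (t^3 - 3/2*t^2 + 1/2*t)/6) (u' := fun t => (t^2 - t + 1/6)/2)
      (v := fun t => f2 (b + t * e)) (v' := fun t => f3 (b + t * e) * e)
      (fun x _ => by
        have := (((hasDerivAt_pow 3 x).sub ((hasDerivAt_pow 2 x).const_mul (3/2))).add
          ((hasDerivAt_id x).const_mul (1/2))).div_const 6
        convert this using 1
        · rfl
        simp only [Nat.cast_ofNat, Nat.reduceSub]; ring)
      hg2
      (((continuous_pow 2).sub continuous_id |>.add continuous_const).div_const 2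
        |>.intervalIntegrable _ _)
      ((ig3.mul_const e))
  -- pull the constant e out of the left-hand integrals
  have p3l : (∫ t in (0:ℝ)..1, (t - 1/2) * (f1 (b + t * e) * e))
      = (∫ t in (0:ℝ)..1, (t - 1/2) * f1 (b + t * e)) * e := by
    rw [← intervalIntegral.integral_mul_const]; simp_rw [mul_assoc]
  have p2l : (∫ t in (0:ℝ)..1, (t^2 - t + 1/6)/2 * (f2 (b + t * e) * e))
      = (∫ t in (0:ℝ)..1, (t^2 - t + 1/6)/2 * f2 (b + t * e)) * e := by
    rw [← intervalIntegral.integral_mul_const]; simp_rw [mul_assoc]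
  have p1l : (∫ t in (0:ℝ)..1, (t^3 - 3/2*t^2 + 1/2*t)/6 * (f3 (b + t * e) * e))
      = (∫ t in (0:ℝ)..1, (t^3 - 3/2*t^2 + 1/2*t)/6 * f3 (b + t * e)) * e := by
    rw [← intervalIntegral.integral_mul_const]; simp_rw [mul_assoc]
  rw [p3l] at parts3
  rw [p2l] at parts2
  rw [p1l] at parts1
  simp only [one_mul, zero_mul, add_zero] at parts1 parts2 parts3
  -- change of variables for the main integral
  have hsub : (∫ x in b..(b + e), f x) = e * ∫ t in (0:ℝ)..1, f (b + t * e) := by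
    have h2 := integral_comp_add_mul (a := (0:ℝ)) (b := 1) f hη b
    rw [he] at h2 ⊢
    simp only [mul_zero, add_zero, mul_one, smul_eq_mul] at h2
    simp_rw [mul_comm (η a b)] at h2
    rw [h2]
    field_simp
    exact (mul_div_cancel_left₀ _ hη).symm
  -- the key identity
  have hE : (∫ x in b..(b + e), f x) - e * (f b + f (b + e)) / 2
      - e ^ 2 / 12 * (f1 b - f1 (b + e))
      = -(e ^ 4 * ∫ t in (0:ℝ)..1, (t^3 - 3/2*t^2 + 1/2*t)/6 * f3 (b + t * e)) := by
    linear_combination hsub + e * parts3 - e^2 * parts2 + e^3 * parts1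
  -- pointwise bound on |f3|
  have hMb : ∀ t ∈ Icc (0:ℝ) 1, |f3 (b + t * e)| ≤ M := by
    intro t ht
    have h0 := hpre b hb a ha t ht
    calc |f3 (b + t * e)| = (|f3 (b + t * e)| ^ q) ^ (1/q) := by
          rw [one_div, Real.rpow_rpow_inv (abs_nonneg _) hq0]
      _ ≤ M := Real.rpow_le_rpow (Real.rpow_nonneg (abs_nonneg _) q)
          (h0.trans_eq (max_comm _ _)) (by positivity)
  have hMnn : 0 ≤ M := Real.rpow_nonneg (le_trans (Real.rpow_nonneg (abs_nonneg _) q) (le_max_left _ _)) _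
  -- computation of the integral of |P3|
  have F : ∀ t : ℝ, HasDerivAt (fun t : ℝ => (t^4/4 - 1/2*t^3 + 1/4*t^2)/6)
      ((t^3 - 3/2*t^2 + 1/2*t)/6) t := by
    intro t
    have := ((((hasDerivAt_pow 4 t).div_const 4).sub ((hasDerivAt_pow 3 t).const_mul (1/2))).add
      ((hasDerivAt_pow 2 t).const_mul (1/4))).div_const 6
    convert this using 1
    · rfl
    · rfl
    norm_num; ring
  have cP3 : Continuous (fun t : ℝ => (t^3 - 3/2*t^2 + 1/2*t)/6) := by fun_prop
  have i1 : (∫ t in (0:ℝ)..(1/2), |(t^3 - 3/2*t^2 + 1/2*t)/6|) = 1/384 := by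
    rw [intervalIntegral.integral_congr (g := fun t : ℝ => (t^3 - 3/2*t^2 + 1/2*t)/6) ?_]
    · rw [intervalIntegral.integral_eq_sub_of_hasDerivAt (fun t _ => F t)
        (cP3.intervalIntegrable _ _)]
      norm_num
    · intro t ht
      rw [uIcc_of_le (by norm_num : (0:ℝ) ≤ 1/2)] at ht
      have h1 := ht.1; have h2 := ht.2
      have key : 0 ≤ t * ((1/2 - t) * (1 - t)) :=
        mul_nonneg h1 (mul_nonneg (by linarith) (by linarith))
      exact abs_of_nonneg (by nlinarith [key])
  have i2 : (∫ t in (1/2:ℝ)..1, |(t^3 - 3/2*t^2 + 1/2*t)/6|) = 1/384 := by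
    rw [intervalIntegral.integral_congr (g := fun t : ℝ => -((t^3 - 3/2*t^2 + 1/2*t)/6)) ?_]
    · rw [intervalIntegral.integral_neg, intervalIntegral.integral_eq_sub_of_hasDerivAt
        (fun t _ => F t) (cP3.intervalIntegrable _ _)]
      norm_num
    · intro t ht
      rw [uIcc_of_le (by norm_num : (1/2:ℝ) ≤ 1)] at ht
      have h1 := ht.1; have h2 := ht.2
      have key : 0 ≤ t * ((t - 1/2) * (1 - t)) :=
        mul_nonneg (by linarith) (mul_nonneg (by linarith) (by linarith))
      exact abs_of_nonpos (by nlinarith [key])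
  have cP3a : Continuous (fun t : ℝ => |(t^3 - 3/2*t^2 + 1/2*t)/6|) := cP3.abs
  have IP3 : (∫ t in (0:ℝ)..1, |(t^3 - 3/2*t^2 + 1/2*t)/6|) = 1/192 := by
    rw [← intervalIntegral.integral_add_adjacent_intervals (a := (0:ℝ)) (b := 1/2) (c := 1)
      (cP3a.intervalIntegrable _ _) (cP3a.intervalIntegrable _ _), i1, i2]
    norm_num
  -- the main bound on the remainder integral
  have hbd : |∫ t in (0:ℝ)..1, (t^3 - 3/2*t^2 + 1/2*t)/6 * f3 (b + t * e)| ≤ 1/192 * M := by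
    have key := intervalIntegral.norm_integral_le_of_norm_le (μ := volume) (a := (0:ℝ)) (b := 1)
      (f := fun t => (t^3 - 3/2*t^2 + 1/2*t)/6 * f3 (b + t * e))
      (g := fun t => |(t^3 - 3/2*t^2 + 1/2*t)/6| * M)
      zero_le_one
      (by
        filter_upwards with t ht
        have ht' : t ∈ Icc (0:ℝ) 1 := by
          exact ⟨ht.1.le, ht.2⟩
        rw [Real.norm_eq_abs, abs_mul]
        exact mul_le_mul_of_nonneg_left (hMb t ht') (abs_nonneg _))
      ((cP3a.mul continuous_const).intervalIntegrable _ _)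
    rw [Real.norm_eq_abs] at key
    rw [intervalIntegral.integral_mul_const, IP3] at key
    calc |∫ t in (0:ℝ)..1, (t^3 - 3/2*t^2 + 1/2*t)/6 * f3 (b + t * e)| ≤ |1/192 * M| := key.trans (le_abs_self _)
      _ = 1/192 * M := abs_of_nonneg (by positivity)
  -- conclude
  rw [hE, abs_neg, abs_mul, abs_of_nonneg (by positivity : (0:ℝ) ≤ e ^ 4)]
  calc e ^ 4 * |∫ t in (0:ℝ)..1, (t^3 - 3/2*t^2 + 1/2*t)/6 * f3 (b + t * e)|
      ≤ e ^ 4 * (1/192 * M) := mul_le_mul_of_nonneg_left hbd (by positivity)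
    _ = e ^ 4 / 192 * M := by ring
end

section
/- Let A ⊆ ℝ be open and invex with respect to η, a,b ∈ A with η(a,b) ≠ 0, f : A → ℝ three times differentiable with |f'''| prequasiinvex on A. Then |∫_b^{b+η(a,b)} f(x)dx - η(a,b)·(f(b)+f(b+η(a,b)))/2 - (η(a,b)²/12)·(f'(b)-f'(b+η(a,b)))| ≤ (η(a,b)^4/192)·max{|f'''(a)|, |f'''(b)|}. -/
open MeasureTheory intervalIntegral Set Real

theorem co23 (A : Set ℝ) (hA : IsOpen A) (η : ℝ → ℝ → ℝ)
    (hinvex : ∀ u ∈ A, ∀ v ∈ A, ∀ t ∈ Icc (0:ℝ) 1, u + t * η v u ∈ A)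
    (a b : ℝ) (ha : a ∈ A) (hb : b ∈ A) (hη : η a b ≠ 0) (f : ℝ → ℝ)
    (hf1 : ∀ x ∈ A, DifferentiableAt ℝ f x)
    (hf2 : ∀ x ∈ A, DifferentiableAt ℝ (deriv f) x)
    (hf3 : ∀ x ∈ A, DifferentiableAt ℝ (deriv (deriv f)) x)
    (hint : IntervalIntegrable (deriv (deriv (deriv f))) volume b (b + η a b))
    (hpre : ∀ u ∈ A, ∀ v ∈ A, ∀ t ∈ Icc (0:ℝ) 1,
      |deriv (deriv (deriv f)) (u + t * η v u)|
        ≤ max (|deriv (deriv (deriv f)) u|) (|deriv (deriv (deriv f)) v|)) :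
    |(∫ x in b..(b + η a b), f x) - η a b * (f b + f (b + η a b)) / 2
      - ((η a b) ^ 2 / 12) * (deriv f b - deriv f (b + η a b))|
    ≤ ((η a b) ^ 4 / 192) *
        max (|deriv (deriv (deriv f)) a|) (|deriv (deriv (deriv f)) b|) := by
  set h := η a b with hh
  set M := max (|deriv (deriv (deriv f)) a|) (|deriv (deriv (deriv f)) b|) with hM
  have hM0 : (0:ℝ) ≤ M := le_trans (abs_nonneg _) (le_max_left _ _)
  have hmem : ∀ s : ℝ, s ∈ Icc (0:ℝ) 1 → b + s * h ∈ A := fun s hs =>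
    hinvex b hb a ha s hs
  set g0 : ℝ → ℝ := fun s => f (b + s * h) with hg0
  set g1 : ℝ → ℝ := fun s => deriv f (b + s * h) * h with hg1
  set g2 : ℝ → ℝ := fun s => deriv (deriv f) (b + s * h) * h * h with hg2
  set g3 : ℝ → ℝ := fun s => deriv (deriv (deriv f)) (b + s * h) * h * h * h with hg3
  have hpath : ∀ s : ℝ, HasDerivAt (fun u : ℝ => b + u * h) h s := fun s => by
    simpa using ((hasDerivAt_id s).mul_const h).const_add b
  have hd0 : ∀ s ∈ Icc (0:ℝ) 1, HasDerivAt g0 (g1 s) s := fun s hs =>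
    ((hf1 _ (hmem s hs)).hasDerivAt).comp s (hpath s)
  have hd1 : ∀ s ∈ Icc (0:ℝ) 1, HasDerivAt g1 (g2 s) s := fun s hs =>
    by have := (((hf2 _ (hmem s hs)).hasDerivAt).comp s (hpath s)).mul_const h; exact this
  have hd2 : ∀ s ∈ Icc (0:ℝ) 1, HasDerivAt g2 (g3 s) s := fun s hs =>
    by have := ((((hf3 _ (hmem s hs)).hasDerivAt).comp s (hpath s)).mul_const h).mul_const h; exact this
  set K : ℝ → ℝ := fun s => (2*s^3 - 3*s^2 + s)/12 with hK
  set K1 : ℝ → ℝ := fun s => (6*s^2 - 6*s + 1)/12 with hK1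
  set K2 : ℝ → ℝ := fun s => s - 1/2 with hK2
  have hdK : ∀ s : ℝ, HasDerivAt K (K1 s) s := fun s => by
    have h1 : HasDerivAt (fun u : ℝ => u) 1 s := hasDerivAt_id s
    have h2 := ((((hasDerivAt_pow 3 s).const_mul 2).sub
      ((hasDerivAt_pow 2 s).const_mul 3)).add h1).div_const 12
    refine h2.congr_deriv ?_
    simp only [hK1]; push_cast; ring
  have hdK1 : ∀ s : ℝ, HasDerivAt K1 (K2 s) s := fun s => by
    rw [hK1]
    have h1 : HasDerivAt (fun u : ℝ => u) 1 s := hasDerivAt_id s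
    have h2 := ((((hasDerivAt_pow 2 s).const_mul 6).sub (h1.const_mul 6)).add_const
      1).div_const 12
    refine h2.congr_deriv ?_
    simp only [hK2]; push_cast; ring
  have hdK2 : ∀ s : ℝ, HasDerivAt K2 1 s := fun s => by
    rw [hK2]
    exact (hasDerivAt_id s).sub_const (1/2 : ℝ)
  set F : ℝ → ℝ := fun s => K s * g2 s - K1 s * g1 s + K2 s * g0 s with hF
  have hdF : ∀ s ∈ uIcc (0:ℝ) 1, HasDerivAt F (K s * g3 s + g0 s) s := by
    intro s hs
    rw [uIcc_of_le zero_le_one] at hs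
    have hD := (((hdK s).mul (hd2 s hs)).sub ((hdK1 s).mul (hd1 s hs))).add
      ((hdK2 s).mul (hd0 s hs))
    refine hD.congr_deriv ?_
    ring
  -- continuity of path functions
  have hcpath : Continuous fun s : ℝ => b + s * h :=
    continuous_const.add (continuous_id.mul continuous_const)
  have hcont0 : ContinuousOn g0 (uIcc (0:ℝ) 1) := by
    rw [uIcc_of_le zero_le_one]
    exact fun s hs => (hd0 s hs).continuousAt.continuousWithinAt
  have hintg0 : IntervalIntegrable g0 volume 0 1 := hcont0.intervalIntegrable
  -- integrability of the third derivative along the path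
  have hint3 : IntervalIntegrable (fun s => deriv (deriv (deriv f)) (b + s * h))
      volume 0 1 := by
    have h1 := hint.comp_add_right b
    have h2 := h1.comp_mul_left (c := h)
    simp only [sub_self, add_sub_cancel_left, zero_div, div_self hη] at h2
    have he : (fun x => deriv (deriv (deriv f)) (h * x + b)) =
        fun s => deriv (deriv (deriv f)) (b + s * h) := by
      funext x; ring_nf
    rwa [he] at h2
  have hcontK : Continuous K := by
    rw [hK]
    exact (((continuous_const.mul (continuous_pow 3)).sub
      (continuous_const.mul (continuous_pow 2))).add continuous_id).div_const 12
  have hintK3 : IntervalIntegrable (fun s => K s * g3 s) volume 0 1 :=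
    ((((hint3.mul_const h).mul_const h).mul_const h)).continuousOn_mul
      hcontK.continuousOn
  have hint_sum : IntervalIntegrable (fun s => K s * g3 s + g0 s) volume 0 1 :=
    hintK3.add hintg0
  have key : (∫ s in (0:ℝ)..1, (K s * g3 s + g0 s)) = F 1 - F 0 :=
    integral_eq_sub_of_hasDerivAt hdF hint_sum
  rw [integral_add hintK3 hintg0] at key
  set I := ∫ s in (0:ℝ)..1, K s * g3 s with hI
  set J := ∫ s in (0:ℝ)..1, g0 s with hJ
  have hF10 : F 1 - F 0 = (g0 0 + g0 1)/2 - (g1 1 - g1 0)/12 := by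
    simp only [hF, hK, hK1, hK2]
    norm_num
    ring
  -- substitution
  have hsub : (∫ x in b..(b + h), f x) = h * J := by
    have e : J = ∫ s in (0:ℝ)..1, f (h * s + b) := by
      apply integral_congr
      intro s _
      simp only [hg0]
      ring_nf
    rw [e, integral_comp_mul_add f hη b]
    simp only [mul_zero, zero_add, mul_one, smul_eq_mul]
    rw [add_comm h b, mul_comm]
    field_simp
  have hT : (∫ x in b..(b + h), f x) - h * (f b + f (b + h)) / 2
      - (h ^ 2 / 12) * (deriv f b - deriv f (b + h)) = -h * I := by
    have hfb : g0 0 = f b := by simp [hg0]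
    have hfbh : g0 1 = f (b + h) := by simp [hg0]
    have h1b : g1 0 = deriv f b * h := by simp [hg1]
    have h1bh : g1 1 = deriv f (b + h) * h := by simp [hg1]
    have hJeq : J = (f b + f (b + h))/2 - (deriv f (b + h) * h - deriv f b * h)/12 - I := by
      rw [hF10, hfb, hfbh, h1b, h1bh] at key
      linarith
    rw [hsub, hJeq]
    ring
  rw [hT, abs_mul, abs_neg]
  -- bound on I
  have habs : ∀ s ∈ uIoc (0:ℝ) 1, ‖K s * g3 s‖ ≤ |K s| * (M * |h|^3) := by
    intro s hs
    have hs' : s ∈ Icc (0:ℝ) 1 := by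
      rw [uIoc_of_le zero_le_one] at hs
      exact ⟨hs.1.le, hs.2⟩
    have h3 := hpre b hb a ha s hs'
    have h3' : |deriv (deriv (deriv f)) (b + s * h)| ≤ M := by
      rw [hM, max_comm]; exact h3
    have hg3abs : |g3 s| ≤ M * |h|^3 := by
      simp only [hg3, abs_mul]
      calc |deriv (deriv (deriv f)) (b + s * h)| * |h| * |h| * |h|
          ≤ M * |h| * |h| * |h| := by
            gcongr
        _ = M * |h|^3 := by ring
    rw [Real.norm_eq_abs, abs_mul]
    exact mul_le_mul_of_nonneg_left hg3abs (abs_nonneg _)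
  have hcontabsK : Continuous fun s => |K s| * (M * |h|^3) :=
    (hcontK.abs).mul continuous_const
  have hintabsK : IntervalIntegrable (fun s => |K s| * (M * |h|^3)) volume 0 1 :=
    hcontabsK.intervalIntegrable 0 1
  have hIle : ‖I‖ ≤ |∫ s in (0:ℝ)..1, |K s| * (M * |h|^3)| :=
    norm_integral_le_abs_of_norm_le ((ae_restrict_mem measurableSet_uIoc).mono habs) hintabsK
  -- compute ∫ |K|
  have hQ : ∀ s : ℝ, HasDerivAt (fun u : ℝ => (u^4/2 - u^3 + u^2/2)/12) (K s) s := by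
    intro s
    have h2 := ((((hasDerivAt_pow 4 s).div_const 2).sub (hasDerivAt_pow 3 s)).add
      ((hasDerivAt_pow 2 s).div_const 2)).div_const 12
    refine h2.congr_deriv ?_
    simp only [hK]; push_cast; ring
  have hcKint : ∀ u v : ℝ, IntervalIntegrable K volume u v := fun u v =>
    hcontK.intervalIntegrable u v
  have i1 : (∫ s in (0:ℝ)..(1/2 : ℝ), K s) = 1/384 := by
    rw [integral_eq_sub_of_hasDerivAt (fun s _ => hQ s) (hcKint 0 (1/2))]
    norm_num
  have i2 : (∫ s in (1/2 : ℝ)..(1:ℝ), K s) = -(1/384) := by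
    rw [integral_eq_sub_of_hasDerivAt (fun s _ => hQ s) (hcKint (1/2) 1)]
    norm_num
  have j1 : (∫ s in (0:ℝ)..(1/2 : ℝ), |K s|) = 1/384 := by
    rw [← i1]
    apply integral_congr
    intro s hs
    rw [uIcc_of_le (by norm_num : (0:ℝ) ≤ 1/2)] at hs
    have hs1 : (0:ℝ) ≤ s := hs.1
    have hs2 : s ≤ 1/2 := hs.2
    apply abs_of_nonneg
    simp only [hK]
    nlinarith [mul_nonneg (mul_nonneg hs1 (by linarith : (0:ℝ) ≤ 1 - 2*s))
      (by linarith : (0:ℝ) ≤ 1 - s)]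
  have j2 : (∫ s in (1/2 : ℝ)..(1:ℝ), |K s|) = 1/384 := by
    have : (∫ s in (1/2 : ℝ)..(1:ℝ), |K s|) = ∫ s in (1/2 : ℝ)..(1:ℝ), -K s := by
      apply integral_congr
      intro s hs
      rw [uIcc_of_le (by norm_num : (1/2:ℝ) ≤ 1)] at hs
      have hs1 : (1/2:ℝ) ≤ s := hs.1
      have hs2 : s ≤ 1 := hs.2
      apply abs_of_nonpos
      simp only [hK]
      nlinarith [mul_nonneg (mul_nonneg (by linarith : (0:ℝ) ≤ s)
        (by linarith : (0:ℝ) ≤ 2*s - 1)) (by linarith : (0:ℝ) ≤ 1 - s)]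
    rw [this, intervalIntegral.integral_neg, i2]
    norm_num
  have jtot : (∫ s in (0:ℝ)..(1:ℝ), |K s|) = 1/192 := by
    rw [← integral_add_adjacent_intervals (a := (0:ℝ)) (b := (1/2:ℝ)) (c := (1:ℝ))
      (hcontK.abs.intervalIntegrable 0 (1/2)) (hcontK.abs.intervalIntegrable (1/2) 1),
      j1, j2]
    norm_num
  have hval : (∫ s in (0:ℝ)..1, |K s| * (M * |h|^3)) = (M * |h|^3) / 192 := by
    rw [intervalIntegral.integral_mul_const, jtot]
    ring
  rw [hval] at hIle
  have hCnn : (0:ℝ) ≤ (M * |h|^3) / 192 := by positivity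
  rw [abs_of_nonneg hCnn] at hIle
  have hIle' : |I| ≤ M * |h|^3 / 192 := hIle
  have h4 : h^4 = |h|^4 := by
    rw [← abs_pow]
    exact (abs_of_nonneg (by positivity)).symm
  calc |h| * |I| ≤ |h| * (M * |h|^3 / 192) :=
        mul_le_mul_of_nonneg_left hIle' (abs_nonneg h)
    _ = |h|^4 / 192 * M := by ring
    _ = h^4 / 192 * M := by rw [h4]
end

section
/- Let A ⊆ ℝ be open and invex with respect to η, a,b ∈ A with η(a,b) ≠ 0, f : A → ℝ three times differentiable, q ≥ 1, and |f'''|^q prequasiinvex on A. If additionally f'(b) = f'(b+η(a,b)), then |∫_b^{b+η(a,b)} f(x)dx - η(a,b)·(f(b)+f(b+η(a,b)))/2| ≤ (η(a,b)^4/192)·(max{|f'''(a)|^q, |f'''(b)|^q})^(1/q). -/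
open MeasureTheory intervalIntegral Set Real

lemma absPolyInt (b c : ℝ) (hc : 0 < c) :
    (∫ x in b..(b+c), |((x-(b+c/2))^3 - (x-(b+c/2))*c^2/4)/6|) = c^4/192 := by
  set p : ℝ → ℝ := fun x => ((x-(b+c/2))^3 - (x-(b+c/2))*c^2/4)/6 with hp
  have hpc : Continuous p := by fun_prop
  have hP : ∀ x : ℝ, HasDerivAt (fun y => ((y-(b+c/2))^4/4 - (y-(b+c/2))^2*c^2/8)/6) (p x) x := by
    intro x
    have h : HasDerivAt (fun y : ℝ => y - (b+c/2)) 1 x := (hasDerivAt_id x).sub_const _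
    have h2 := (((h.pow 4).div_const 4).sub (((h.pow 2).mul_const (c^2)).div_const 8)).div_const 6
    exact h2.congr_deriv (by simp [hp]; ring)
  have key : ∀ u v : ℝ, (∫ x in u..v, p x)
      = (((v-(b+c/2))^4/4 - (v-(b+c/2))^2*c^2/8)/6) - (((u-(b+c/2))^4/4 - (u-(b+c/2))^2*c^2/8)/6) := by
    intro u v
    exact integral_eq_sub_of_hasDerivAt (fun x _ => hP x) (hpc.intervalIntegrable u v)
  have hm : b ≤ b + c/2 := by linarith
  have hm2 : b + c/2 ≤ b + c := by linarith
  have hsplit : (∫ x in b..(b+c), |p x|)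
      = (∫ x in b..(b+c/2), |p x|) + (∫ x in (b+c/2)..(b+c), |p x|) :=
    (integral_add_adjacent_intervals (hpc.abs.intervalIntegrable _ _)
      (hpc.abs.intervalIntegrable _ _)).symm
  have e1 : (∫ x in b..(b+c/2), |p x|) = ∫ x in b..(b+c/2), p x := by
    apply integral_congr
    intro x hx
    rw [uIcc_of_le hm] at hx
    obtain ⟨h1, h2⟩ := hx
    have : 0 ≤ p x := by
      simp only [hp]
      nlinarith [sq_nonneg (x - b), sq_nonneg (x - (b+c/2))]
    simpa [abs_of_nonneg this]
  have e2 : (∫ x in (b+c/2)..(b+c), |p x|) = ∫ x in (b+c/2)..(b+c), -p x := by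
    apply integral_congr
    intro x hx
    rw [uIcc_of_le hm2] at hx
    obtain ⟨h1, h2⟩ := hx
    have : p x ≤ 0 := by
      simp only [hp]
      nlinarith [sq_nonneg (x - (b+c)), sq_nonneg (x - (b+c/2))]
    simpa [abs_of_nonpos this]
  rw [hsplit, e1, e2, intervalIntegral.integral_neg, key, key]
  ring

lemma helperBound (g : ℝ → ℝ) (b c M : ℝ) (hc : 0 < c)
    (hg : IntervalIntegrable g volume b (b+c))
    (hM : ∀ x ∈ Set.uIcc b (b+c), |g x| ≤ M) :
    |∫ x in b..(b+c), (((x-(b+c/2))^3 - (x-(b+c/2))*c^2/4)/6) * g x| ≤ c^4/192 * M := by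
  set p : ℝ → ℝ := fun x => ((x-(b+c/2))^3 - (x-(b+c/2))*c^2/4)/6 with hp
  have hpc : Continuous p := by fun_prop
  have hbc : b ≤ b + c := by linarith
  have hint1 : IntervalIntegrable (fun x => p x * g x) volume b (b+c) :=
    hg.continuousOn_mul hpc.continuousOn
  have h1 : |∫ x in b..(b+c), p x * g x| ≤ ∫ x in b..(b+c), |p x * g x| := by
    have := intervalIntegral.norm_integral_le_integral_norm (f := fun x => p x * g x) (μ := volume) hbc
    simpa only [Real.norm_eq_abs] using this
  have h2 : (∫ x in b..(b+c), |p x * g x|) ≤ ∫ x in b..(b+c), |p x| * M := by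
    apply integral_mono_on hbc hint1.abs ((hpc.abs.intervalIntegrable _ _).mul_const M)
    intro x hx
    rw [abs_mul]
    exact mul_le_mul_of_nonneg_left (hM x (by rwa [uIcc_of_le hbc])) (abs_nonneg _)
  have h3 : (∫ x in b..(b+c), |p x| * M) = c^4/192 * M := by
    rw [intervalIntegral.integral_mul_const, absPolyInt b c hc]
  linarith

theorem co24 (A : Set ℝ) (hA : IsOpen A) (η : ℝ → ℝ → ℝ)
    (hinvex : ∀ u ∈ A, ∀ v ∈ A, ∀ t ∈ Icc (0:ℝ) 1, u + t * η v u ∈ A)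
    (a b : ℝ) (ha : a ∈ A) (hb : b ∈ A) (hη : η a b ≠ 0) (f : ℝ → ℝ)
    (hf1 : ∀ x ∈ A, DifferentiableAt ℝ f x)
    (hf2 : ∀ x ∈ A, DifferentiableAt ℝ (deriv f) x)
    (hf3 : ∀ x ∈ A, DifferentiableAt ℝ (deriv (deriv f)) x)
    (hint : IntervalIntegrable (deriv (deriv (deriv f))) volume b (b + η a b))
    (q : ℝ) (hq : 1 ≤ q)
    (hpre : ∀ u ∈ A, ∀ v ∈ A, ∀ t ∈ Icc (0:ℝ) 1,
      |deriv (deriv (deriv f)) (u + t * η v u)| ^ q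
        ≤ max (|deriv (deriv (deriv f)) u| ^ q) (|deriv (deriv (deriv f)) v| ^ q))
    (hder : deriv f b = deriv f (b + η a b)) :
    |(∫ x in b..(b + η a b), f x) - η a b * (f b + f (b + η a b)) / 2|
    ≤ ((η a b) ^ 4 / 192) *
        (max (|deriv (deriv (deriv f)) a| ^ q) (|deriv (deriv (deriv f)) b| ^ q))
          ^ (1 / q) := by
  set c := η a b with hcdef
  set g3 : ℝ → ℝ := deriv (deriv (deriv f)) with hg3def
  set M : ℝ := (max (|g3 a| ^ q) (|g3 b| ^ q)) ^ (1 / q) with hMdef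
  have hq0 : (0:ℝ) < q := lt_of_lt_of_le one_pos hq
  -- parametrization of the interval
  have hparam : ∀ x ∈ Set.uIcc b (b+c), ∃ t ∈ Icc (0:ℝ) 1, x = b + t * c := by
    intro x hx
    refine ⟨(x - b) / c, ?_, by field_simp; ring⟩
    rcases hη.lt_or_gt with h | h
    · rw [uIcc_of_ge (by linarith : b + c ≤ b)] at hx
      obtain ⟨h1, h2⟩ := hx
      constructor
      · rw [le_div_iff_of_neg h]; linarith
      · rw [div_le_one_of_neg h]; linarith
    · rw [uIcc_of_le (by linarith : b ≤ b + c)] at hx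
      obtain ⟨h1, h2⟩ := hx
      constructor
      · exact div_nonneg (by linarith) h.le
      · rw [div_le_one h]; linarith
  have hsub : Set.uIcc b (b+c) ⊆ A := by
    intro x hx
    obtain ⟨t, ht, rfl⟩ := hparam x hx
    exact hinvex b hb a ha t ht
  -- bound on |f'''| on the interval
  have hbound : ∀ x ∈ Set.uIcc b (b+c), |g3 x| ≤ M := by
    intro x hx
    obtain ⟨t, ht, rfl⟩ := hparam x hx
    have h := hpre b hb a ha t ht
    have h2 := Real.rpow_le_rpow (by positivity) h (by positivity : (0:ℝ) ≤ 1/q)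
    rw [← Real.rpow_mul (abs_nonneg _), mul_one_div, div_self hq0.ne', Real.rpow_one,
      max_comm] at h2
    exact h2
  -- continuity / derivatives on the interval
  have hd0 : ∀ x ∈ Set.uIcc b (b+c), HasDerivAt f (deriv f x) x :=
    fun x hx => (hf1 x (hsub hx)).hasDerivAt
  have hd1 : ∀ x ∈ Set.uIcc b (b+c), HasDerivAt (deriv f) (deriv (deriv f) x) x :=
    fun x hx => (hf2 x (hsub hx)).hasDerivAt
  have hd2 : ∀ x ∈ Set.uIcc b (b+c), HasDerivAt (deriv (deriv f)) (g3 x) x :=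
    fun x hx => (hf3 x (hsub hx)).hasDerivAt
  have hfc : ContinuousOn f (Set.uIcc b (b+c)) :=
    fun x hx => ((hf1 x (hsub hx)).continuousAt).continuousWithinAt
  have hg1c : ContinuousOn (deriv f) (Set.uIcc b (b+c)) :=
    fun x hx => ((hf2 x (hsub hx)).continuousAt).continuousWithinAt
  have hg2c : ContinuousOn (deriv (deriv f)) (Set.uIcc b (b+c)) :=
    fun x hx => ((hf3 x (hsub hx)).continuousAt).continuousWithinAt
  -- polynomials
  set p : ℝ → ℝ := fun x => ((x-(b+c/2))^3 - (x-(b+c/2))*c^2/4)/6 with hpdef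
  set p1 : ℝ → ℝ := fun x => ((x-(b+c/2))^2*3 - c^2/4)/6 with hp1def
  set p2 : ℝ → ℝ := fun x => x - (b+c/2) with hp2def
  have hpC : Continuous p := by fun_prop
  have hp1C : Continuous p1 := by fun_prop
  have hp2C : Continuous p2 := by fun_prop
  have hp : ∀ x : ℝ, HasDerivAt p (p1 x) x := by
    intro x
    have h : HasDerivAt (fun y : ℝ => y - (b+c/2)) 1 x := (hasDerivAt_id x).sub_const _
    have h2 := ((h.pow 3).sub ((h.mul_const (c^2)).div_const 4)).div_const 6
    exact h2.congr_deriv (by simp [hp1def]; ring)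
  have hp1 : ∀ x : ℝ, HasDerivAt p1 (p2 x) x := by
    intro x
    have h : HasDerivAt (fun y : ℝ => y - (b+c/2)) 1 x := (hasDerivAt_id x).sub_const _
    have h2 := (((h.pow 2).mul_const 3).sub_const (c^2/4)).div_const 6
    exact h2.congr_deriv (by simp [hp2def]; ring)
  have hp2 : ∀ x : ℝ, HasDerivAt p2 1 x := fun x => (hasDerivAt_id x).sub_const _
  -- integration by parts, three times
  have I1 : (∫ x in b..(b+c), p x * g3 x)
      = p (b+c) * deriv (deriv f) (b+c) - p b * deriv (deriv f) b
        - ∫ x in b..(b+c), p1 x * deriv (deriv f) x :=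
    integral_mul_deriv_eq_deriv_mul (fun x _ => hp x) hd2
      (hp1C.intervalIntegrable _ _) hint
  have I2 : (∫ x in b..(b+c), p1 x * deriv (deriv f) x)
      = p1 (b+c) * deriv f (b+c) - p1 b * deriv f b
        - ∫ x in b..(b+c), p2 x * deriv f x :=
    integral_mul_deriv_eq_deriv_mul (fun x _ => hp1 x) hd1
      (hp2C.intervalIntegrable _ _) (hg2c.intervalIntegrable)
  have I3 : (∫ x in b..(b+c), p2 x * deriv f x)
      = p2 (b+c) * f (b+c) - p2 b * f b - ∫ x in b..(b+c), 1 * f x :=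
    integral_mul_deriv_eq_deriv_mul (fun x _ => hp2 x) hd0
      (continuous_const.intervalIntegrable _ _) (hg1c.intervalIntegrable)
  have hpb : p b = 0 := by simp only [hpdef]; ring
  have hpbc : p (b+c) = 0 := by simp only [hpdef]; ring
  have hp1eq : p1 (b+c) * deriv f (b+c) - p1 b * deriv f b = 0 := by
    rw [← hder]
    have : p1 (b+c) = p1 b := by simp only [hp1def]; ring
    rw [this]; ring
  have hp2b : p2 b = -(c/2) := by simp only [hp2def]; ring
  have hp2bc : p2 (b+c) = c/2 := by simp only [hp2def]; ring
  have hone : (∫ x in b..(b+c), 1 * f x) = ∫ x in b..(b+c), f x := by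
    simp
  have key : (∫ x in b..(b+c), f x) - c * (f b + f (b+c)) / 2
      = -∫ x in b..(b+c), p x * g3 x := by
    rw [I1, hpb, hpbc, I2, hp1eq, I3, hp2b, hp2bc, hone]
    ring
  rw [key, abs_neg]
  rcases hη.lt_or_gt with h | h
  · -- c < 0
    have hint' : IntervalIntegrable g3 volume (b+c) ((b+c) + -c) := by
      rw [show (b+c) + -c = b by ring]; exact hint.symm
    have hM' : ∀ x ∈ Set.uIcc (b+c) ((b+c) + -c), |g3 x| ≤ M := by
      rw [show (b+c) + -c = b by ring]
      intro x hx
      exact hbound x (by rwa [Set.uIcc_comm])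
    have hb2 := helperBound g3 (b+c) (-c) M (by linarith) hint' hM'
    rw [show (b+c) + -c = b by ring] at hb2
    have hcg : (∫ x in (b+c)..b,
          (((x-((b+c)+(-c)/2))^3 - (x-((b+c)+(-c)/2))*(-c)^2/4)/6) * g3 x)
        = ∫ x in (b+c)..b, p x * g3 x := by
      apply integral_congr
      intro x _
      simp only [hpdef]
      ring_nf
    rw [hcg] at hb2
    rw [show (∫ x in b..(b+c), p x * g3 x) = -∫ x in (b+c)..b, p x * g3 x from
      integral_symm (b+c) b, abs_neg]
    calc |∫ x in (b+c)..b, p x * g3 x| ≤ (-c)^4/192 * M := hb2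
      _ = c^4/192 * M := by ring
  · -- c > 0
    have := helperBound g3 b c M h hint hbound
    change |∫ x in b..(b+c), p x * g3 x| ≤ c^4/192 * M at this
    linarith [this]
end

section
/- Let A ⊆ ℝ be open and invex with respect to η, a,b ∈ A with η(a,b) ≠ 0, f : A → ℝ three times differentiable, q > 1, 1/p + 1/q = 1, and |f'''|^q prequasiinvex on A. Then |∫_b^{b+η(a,b)} f(x)dx - η(a,b)·(f(b)+f(b+η(a,b)))/2 - (η(a,b)²/12)·(f'(b)-f'(b+η(a,b)))| ≤ (η(a,b)^4/(24·3^(1/q)))·(1/((p+1)(p+3)))^(1/p)·(max{|f'''(a)|^q, |f'''(b)|^q})^(1/q). -/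
set_option maxHeartbeats 1000000

open MeasureTheory intervalIntegral Set Real

theorem partA (A : Set ℝ) (η : ℝ → ℝ → ℝ)
    (hinvex : ∀ u ∈ A, ∀ v ∈ A, ∀ t ∈ Icc (0:ℝ) 1, u + t * η v u ∈ A)
    (a b : ℝ) (ha : a ∈ A) (hb : b ∈ A) (hη : η a b ≠ 0) (f : ℝ → ℝ)
    (hf1 : ∀ x ∈ A, DifferentiableAt ℝ f x)
    (hf2 : ∀ x ∈ A, DifferentiableAt ℝ (deriv f) x)
    (hf3 : ∀ x ∈ A, DifferentiableAt ℝ (deriv (deriv f)) x)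
    (hint : IntervalIntegrable (deriv (deriv (deriv f))) volume b (b + η a b)) :
    (∫ x in b..(b + η a b), f x) - η a b * (f b + f (b + η a b)) / 2
      - ((η a b) ^ 2 / 12) * (deriv f b - deriv f (b + η a b))
    = (η a b)^4 * ∫ t in (0:ℝ)..1,
        (-(t^3/6) + t^2/4 - t/12) * deriv (deriv (deriv f)) (b + t * η a b) := by
  set h := η a b with hh
  have hmem : ∀ t ∈ Icc (0:ℝ) 1, b + t * h ∈ A := fun t ht => hinvex b hb a ha t ht
  have hIcc : uIcc (0:ℝ) 1 = Icc 0 1 := uIcc_of_le zero_le_one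
  have hlin : ∀ t : ℝ, HasDerivAt (fun s : ℝ => b + s * h) h t := by
    intro t
    simpa using ((hasDerivAt_id t).mul_const h).const_add b
  have hv0 : ∀ t ∈ uIcc (0:ℝ) 1, HasDerivAt (fun s => f (b + s*h)) (deriv f (b + t*h) * h) t := by
    intro t ht
    exact (hf1 _ (hmem t (hIcc ▸ ht))).hasDerivAt.comp t (hlin t)
  have hv1 : ∀ t ∈ uIcc (0:ℝ) 1, HasDerivAt (fun s => deriv f (b + s*h) * h)
      (deriv (deriv f) (b + t*h) * h * h) t := by
    intro t ht
    exact ((hf2 _ (hmem t (hIcc ▸ ht))).hasDerivAt.comp t (hlin t)).mul_const h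
  have hv2 : ∀ t ∈ uIcc (0:ℝ) 1, HasDerivAt (fun s => deriv (deriv f) (b + s*h) * h * h)
      (deriv (deriv (deriv f)) (b + t*h) * h * h * h) t := by
    intro t ht
    exact (((hf3 _ (hmem t (hIcc ▸ ht))).hasDerivAt.comp t (hlin t)).mul_const h).mul_const h
  -- polynomial kernels
  have hu0 : ∀ t : ℝ, HasDerivAt (fun s : ℝ => -(s^3/6) + s^2/4 - s/12)
      (-(t^2/2) + t/2 - 1/12) t := by
    intro t
    have H := (((hasDerivAt_pow 3 t).div_const 6).neg.add ((hasDerivAt_pow 2 t).div_const 4)).sub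
      ((hasDerivAt_id t).div_const 12)
    exact H.congr_deriv (by push_cast; ring)
  have hu1 : ∀ t : ℝ, HasDerivAt (fun s : ℝ => -(s^2/2) + s/2 - 1/12) (-t + 1/2) t := by
    intro t
    have H := (((hasDerivAt_pow 2 t).div_const 2).neg.add ((hasDerivAt_id t).div_const 2)).sub
      (hasDerivAt_const t (1/12 : ℝ))
    exact H.congr_deriv (by push_cast; ring)
  have hu2 : ∀ t : ℝ, HasDerivAt (fun s : ℝ => -s + 1/2) (-1 : ℝ) t := by
    intro t
    simpa using (hasDerivAt_id t).neg.add_const (1/2 : ℝ)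
  -- integrabilities
  have hφ : IntervalIntegrable (fun t => deriv (deriv (deriv f)) (b + t * h)) volume 0 1 := by
    have h1 := (hint.comp_add_left b).comp_mul_left (c := h)
    simp only [sub_self, zero_div, add_sub_cancel_left, div_self hη] at h1
    simpa [mul_comm] using h1
  have hv3int : IntervalIntegrable (fun t => deriv (deriv (deriv f)) (b + t*h) * h * h * h)
      volume 0 1 := ((hφ.mul_const h).mul_const h).mul_const h
  have hcont0 : IntervalIntegrable (fun t => f (b + t*h)) volume 0 1 :=
    (continuousOn_of_forall_continuousAt (fun t ht => (hv0 t ht).continuousAt)).intervalIntegrable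
  have hcont1 : IntervalIntegrable (fun t => deriv f (b + t*h) * h) volume 0 1 :=
    (continuousOn_of_forall_continuousAt (fun t ht => (hv1 t ht).continuousAt)).intervalIntegrable
  have hcont2 : IntervalIntegrable (fun t => deriv (deriv f) (b + t*h) * h * h) volume 0 1 :=
    (continuousOn_of_forall_continuousAt (fun t ht => (hv2 t ht).continuousAt)).intervalIntegrable
  have hu1int : IntervalIntegrable (fun t : ℝ => -(t^2/2) + t/2 - 1/12) volume 0 1 := by
    apply Continuous.intervalIntegrable; fun_prop
  have hu2int : IntervalIntegrable (fun t : ℝ => -t + 1/2) volume 0 1 := by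
    apply Continuous.intervalIntegrable; fun_prop
  have hcnst : IntervalIntegrable (fun _ : ℝ => (-1:ℝ)) volume 0 1 := intervalIntegrable_const
  -- IBP
  have I1 := intervalIntegral.integral_mul_deriv_eq_deriv_mul (a := (0:ℝ)) (b := (1:ℝ))
    (fun t ht => hu0 t) hv2 hu1int hv3int
  have I2 := intervalIntegral.integral_mul_deriv_eq_deriv_mul (a := (0:ℝ)) (b := (1:ℝ))
    (fun t ht => hu1 t) hv1 hu2int hcont2
  have I3 := intervalIntegral.integral_mul_deriv_eq_deriv_mul (a := (0:ℝ)) (b := (1:ℝ))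
    (fun t ht => hu2 t) hv0 hcnst hcont1
  norm_num at I1 I2 I3
  -- substitution
  have hsub : (∫ x in b..(b+h), f x) = h * ∫ t in (0:ℝ)..1, f (b + t*h) := by
    have h1 := intervalIntegral.integral_comp_mul_add (a := (0:ℝ)) (b := (1:ℝ)) f hη b
    simp only [mul_zero, zero_add, mul_one, smul_eq_mul] at h1
    have h2 : ∫ t in (0:ℝ)..1, f (b + t*h) = ∫ x in (0:ℝ)..1, f (h*x+b) := by
      apply intervalIntegral.integral_congr
      intro t _
      ring_nf
    rw [h2, h1, show h + b = b + h from add_comm h b]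
    field_simp
  have hpull : (∫ t in (0:ℝ)..1,
        (-(t^3/6) + t^2/4 - t/12) * (deriv (deriv (deriv f)) (b + t*h) * h * h * h))
      = (∫ t in (0:ℝ)..1, (-(t^3/6) + t^2/4 - t/12) * deriv (deriv (deriv f)) (b + t*h))
        * (h*h*h) := by
    rw [← intervalIntegral.integral_mul_const]
    congr 1
    funext t
    ring
  rw [hsub]
  linear_combination h*hpull - h*I1 + h*I2 - h*I3


theorem partB (p q : ℝ) (hq : 1 < q) (hpq : 1 / p + 1 / q = 1) (φ : ℝ → ℝ)
    (hφ : IntervalIntegrable φ volume 0 1) (M : ℝ)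
    (hbound : ∀ t ∈ Icc (0:ℝ) 1, |φ t| ^ q ≤ M) :
    |∫ t in (0:ℝ)..1, (-(t^3/6) + t^2/4 - t/12) * φ t|
      ≤ (1/(24 * (3:ℝ) ^ (1/q))) * (1/((p+1)*(p+3))) ^ (1/p) * M ^ (1/q) := by
  have hq0 : 0 < q := lt_trans one_pos hq
  have hq1 : 1/q < 1 := by rw [div_lt_one hq0]; exact hq
  have hq1' : 0 < 1/q := by positivity
  have hp1q : 1/p = 1 - 1/q := by linarith
  have hp0 : 0 < p := by
    have h3 : 0 < 1/p := by rw [hp1q]; linarith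
    exact one_div_pos.mp h3
  have hp1 : 1 < p := by
    have : 1/p < 1 := by rw [hp1q]; linarith
    exact (div_lt_one hp0).mp this
  have hpq' : p.HolderConjugate q := Real.holderConjugate_iff.mpr ⟨hp1, by rw [← one_div, ← one_div]; exact hpq⟩
  have hM0 : 0 ≤ M := le_trans (by positivity) (hbound 0 ⟨le_refl 0, zero_le_one⟩)
  set μ := volume.restrict (Ioc (0:ℝ) 1) with hμ
  haveI : IsFiniteMeasure μ := ⟨by rw [hμ, Measure.restrict_apply_univ, Real.volume_Ioc]; norm_num⟩
  have hφae : AEStronglyMeasurable φ μ := hφ.1.aestronglyMeasurable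
  -- the two Hölder factors
  set F1 : ℝ → ℝ := fun t => |1 - 2*t| * (t*(1-t)) ^ (1/p) with hF1
  set F2 : ℝ → ℝ := fun t => (t*(1-t)) ^ (1/q) * |φ t| with hF2
  have hc1 : Continuous fun t : ℝ => t*(1-t) := by fun_prop
  have hc2 : Continuous fun t : ℝ => |1 - 2*t| := by fun_prop
  have hF1c : Continuous F1 :=
    hc2.mul ((Real.continuous_rpow_const (by positivity)).comp hc1)
  have hF2m : AEStronglyMeasurable F2 μ :=
    (((Real.continuous_rpow_const hq1'.le).comp hc1).aestronglyMeasurable).mul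
      (continuous_abs.measurable.comp_aemeasurable hφae.aemeasurable).aestronglyMeasurable
  -- pointwise facts on Ioc
  have hmemt : ∀ t ∈ Ioc (0:ℝ) 1, 0 ≤ t*(1-t) := by
    intro t ht
    have := ht.1.le; have := ht.2
    nlinarith
  have hmemt1 : ∀ t ∈ Ioc (0:ℝ) 1, t*(1-t) ≤ 1 := by
    intro t ht
    nlinarith [ht.1.le, ht.2]
  have hφM : ∀ t ∈ Ioc (0:ℝ) 1, |φ t| ≤ M ^ (1/q) := by
    intro t ht
    have h1 : |φ t| ^ q ≤ M := hbound t ⟨ht.1.le, ht.2⟩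
    have h2 := Real.rpow_le_rpow (by positivity) h1 hq1'.le
    rwa [← Real.rpow_mul (abs_nonneg _), mul_one_div_cancel hq0.ne', Real.rpow_one] at h2
  -- |u0 t * φ t| = (1/12) * (F1 t * F2 t) on Ioc
  have hptwise : ∀ t ∈ Ioc (0:ℝ) 1, |(-(t^3/6) + t^2/4 - t/12) * φ t| = (1/12) * (F1 t * F2 t) := by
    intro t ht
    have h1 : 0 ≤ t*(1-t) := hmemt t ht
    have e1 : (t*(1-t)) ^ (1/p) * (t*(1-t)) ^ (1/q) = t*(1-t) := by
      rw [← Real.rpow_add' h1 (by rw [hpq]; norm_num), hpq, Real.rpow_one]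
    have e2 : |(-(t^3/6) + t^2/4 - t/12)| = (1/12) * ((t*(1-t)) * |1 - 2*t|) := by
      rw [show (-(t^3/6) + t^2/4 - t/12) = (1/12) * ((t*(1-t)) * (2*t-1)) from by ring,
        abs_mul, abs_mul, abs_of_nonneg h1, abs_of_pos (by norm_num : (0:ℝ) < 1/12),
        abs_sub_comm (2*t) 1]
    rw [abs_mul, e2, hF1, hF2]
    simp only []
    rw [show |1-2*t| * (t*(1-t)) ^ (1/p) * ((t*(1-t)) ^ (1/q) * |φ t|)
        = ((t*(1-t)) ^ (1/p) * (t*(1-t)) ^ (1/q)) * |1-2*t| * |φ t| from by ring, e1]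
    ring
  -- Step: reduce to set integral over Ioc
  have habs : |∫ t in (0:ℝ)..1, (-(t^3/6) + t^2/4 - t/12) * φ t|
      ≤ ∫ t in (0:ℝ)..1, |(-(t^3/6) + t^2/4 - t/12) * φ t| :=
    intervalIntegral.abs_integral_le_integral_abs zero_le_one
  have hset : (∫ t in (0:ℝ)..1, |(-(t^3/6) + t^2/4 - t/12) * φ t|)
      = ∫ t, (1/12) * (F1 t * F2 t) ∂μ := by
    rw [intervalIntegral.integral_of_le zero_le_one]
    exact setIntegral_congr_fun measurableSet_Ioc hptwise
  -- Hölder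
  have hF1nn : 0 ≤ᵐ[μ] F1 := by
    filter_upwards [ae_restrict_mem measurableSet_Ioc] with t ht
    have := hmemt t ht
    positivity
  have hF2nn : 0 ≤ᵐ[μ] F2 := by
    filter_upwards [ae_restrict_mem measurableSet_Ioc] with t ht
    have h1 := hmemt t ht
    have h2 : 0 ≤ (t*(1-t)) ^ (1/q) := Real.rpow_nonneg h1 _
    positivity
  have hF1lp : MemLp F1 (ENNReal.ofReal p) μ := by
    apply MemLp.of_bound hF1c.aestronglyMeasurable 1
    filter_upwards [ae_restrict_mem measurableSet_Ioc] with t ht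
    have h1 := hmemt t ht
    have h2 : t*(1-t) ≤ 1 := hmemt1 t ht
    have h3 : |1 - 2*t| ≤ 1 := by rw [abs_le]; constructor <;> nlinarith [ht.1.le, ht.2]
    have h4 : (t*(1-t)) ^ (1/p) ≤ 1 := Real.rpow_le_one h1 h2 (by positivity)
    rw [Real.norm_eq_abs, hF1]
    simp only []
    rw [abs_mul, abs_abs, abs_of_nonneg (Real.rpow_nonneg h1 _)]
    nlinarith [abs_nonneg (1-2*t)]
  have hF2lp : MemLp F2 (ENNReal.ofReal q) μ := by
    apply MemLp.of_bound hF2m (M ^ (1/q))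
    filter_upwards [ae_restrict_mem measurableSet_Ioc] with t ht
    have h1 := hmemt t ht
    have h2 : t*(1-t) ≤ 1 := hmemt1 t ht
    have h4 : (t*(1-t)) ^ (1/q) ≤ 1 := Real.rpow_le_one h1 h2 hq1'.le
    have h5 := hφM t ht
    rw [Real.norm_eq_abs, hF2]
    simp only []
    rw [abs_mul, abs_of_nonneg (Real.rpow_nonneg h1 _), abs_abs]
    nlinarith [abs_nonneg (φ t), Real.rpow_nonneg h1 (1/q)]
  have holder := integral_mul_le_Lp_mul_Lq_of_nonneg hpq' hF1nn hF2nn hF1lp hF2lp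
  have hX : (0:ℝ) < (p+1)*(p+3) := by nlinarith
  -- compute ∫ F1^p
  have hF1p : (∫ t, F1 t ^ p ∂μ) = 1/(2*((p+1)*(p+3))) := by
    have e3 : EqOn (fun t => F1 t ^ p) (fun t : ℝ => |1-2*t| ^ p * (t*(1-t))) (Ioc (0:ℝ) 1) := by
      intro t ht
      have h1 := hmemt t ht
      simp only [hF1]
      rw [Real.mul_rpow (abs_nonneg _) (Real.rpow_nonneg h1 _), ← Real.rpow_mul h1,
        one_div_mul_cancel hp0.ne', Real.rpow_one]
    have hWc : Continuous fun t : ℝ => |1-2*t| ^ p * (t*(1-t)) :=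
      (hc2.rpow_const (fun x => Or.inr hp0.le)).mul hc1
    -- base integral
    have hbase : (∫ s in (0:ℝ)..1, s ^ p * ((1-s^2)/4)) = (1/(p+1) - 1/(p+3))/4 := by
      have e4 : EqOn (fun s : ℝ => s ^ p * ((1-s^2)/4)) (fun s => (s ^ p - s ^ (p+2))/4)
          (uIcc 0 1) := by
        intro s hs
        rw [uIcc_of_le zero_le_one] at hs
        simp only []
        rw [Real.rpow_add' hs.1 (by positivity), show ((2:ℝ)) = ((2:ℕ):ℝ) by norm_num,
          Real.rpow_natCast]
        ring
      rw [intervalIntegral.integral_congr e4, intervalIntegral.integral_div,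
        intervalIntegral.integral_sub (intervalIntegrable_rpow' (by linarith))
          (intervalIntegrable_rpow' (by linarith)),
        integral_rpow (Or.inl (by linarith)), integral_rpow (Or.inl (by linarith)),
        Real.one_rpow, Real.one_rpow,
        Real.zero_rpow (by positivity : (0:ℝ) < p+1).ne',
        Real.zero_rpow (by positivity : (0:ℝ) < p+2+1).ne']
      have hne1 : (p:ℝ)+1 ≠ 0 := by positivity
      have hne3 : (p:ℝ)+2+1 ≠ 0 := by positivity
      field_simp
      ring
    -- piece on [1/2, 1]
    have hp2 : (∫ t in (1/2:ℝ)..1, |1-2*t| ^ p * (t*(1-t)))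
        = (1/2) * ∫ s in (0:ℝ)..1, s ^ p * ((1-s^2)/4) := by
      have c2 := intervalIntegral.integral_comp_mul_add (a := (0:ℝ)) (b := (1:ℝ))
        (fun t => |1-2*t| ^ p * (t*(1-t))) (show (1/2:ℝ) ≠ 0 by norm_num) (1/2)
      have e5 : EqOn (fun x : ℝ => |1-2*((1/2)*x+1/2)| ^ p * (((1/2)*x+1/2)*(1-((1/2)*x+1/2))))
          (fun s : ℝ => s ^ p * ((1-s^2)/4)) (uIcc 0 1) := by
        intro s hs
        rw [uIcc_of_le zero_le_one] at hs
        simp only []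
        rw [show (1-2*((1/2)*s+1/2)) = -s from by ring, abs_neg, abs_of_nonneg hs.1]
        congr 1
        ring
      rw [intervalIntegral.integral_congr e5] at c2
      norm_num at c2
      linarith [c2]
    -- piece on [0, 1/2]
    have hp1' : (∫ t in (0:ℝ)..(1/2), |1-2*t| ^ p * (t*(1-t)))
        = (1/2) * ∫ s in (0:ℝ)..1, s ^ p * ((1-s^2)/4) := by
      have c1 := intervalIntegral.integral_comp_mul_add (a := (0:ℝ)) (b := (1:ℝ))
        (fun t => |1-2*t| ^ p * (t*(1-t))) (show (-(1/2):ℝ) ≠ 0 by norm_num) (1/2)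
      have e5 : EqOn (fun x : ℝ => |1-2*(-(1/2)*x+1/2)| ^ p * ((-(1/2)*x+1/2)*(1-(-(1/2)*x+1/2))))
          (fun s : ℝ => s ^ p * ((1-s^2)/4)) (uIcc 0 1) := by
        intro s hs
        rw [uIcc_of_le zero_le_one] at hs
        simp only []
        rw [show (1-2*(-(1/2)*s+1/2)) = s from by ring, abs_of_nonneg hs.1]
        congr 1
        ring
      rw [intervalIntegral.integral_congr e5] at c1
      norm_num at c1
      rw [intervalIntegral.integral_symm 0 ((1:ℝ)/2)] at c1
      linarith [c1]
    have hsplit : (∫ t in (0:ℝ)..1, |1-2*t| ^ p * (t*(1-t)))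
        = (∫ t in (0:ℝ)..(1/2), |1-2*t| ^ p * (t*(1-t)))
          + ∫ t in (1/2:ℝ)..1, |1-2*t| ^ p * (t*(1-t)) :=
      (intervalIntegral.integral_add_adjacent_intervals
        (hWc.intervalIntegrable _ _) (hWc.intervalIntegrable _ _)).symm
    have : (∫ t, F1 t ^ p ∂μ) = ∫ t in (0:ℝ)..1, |1-2*t| ^ p * (t*(1-t)) := by
      rw [intervalIntegral.integral_of_le zero_le_one, hμ]
      exact setIntegral_congr_fun measurableSet_Ioc e3
    rw [this, hsplit, hp2, hp1', hbase]
    field_simp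
    ring
  -- bound ∫ F2^q
  have hF2q : (∫ t, F2 t ^ q ∂μ) ≤ M/6 := by
    have e6 : EqOn (fun t => F2 t ^ q) (fun t : ℝ => (t*(1-t)) * |φ t| ^ q) (Ioc (0:ℝ) 1) := by
      intro t ht
      have h1 := hmemt t ht
      simp only [hF2]
      rw [Real.mul_rpow (Real.rpow_nonneg h1 _) (abs_nonneg _), ← Real.rpow_mul h1,
        one_div_mul_cancel hq0.ne', Real.rpow_one]
    have hstep : (∫ t, F2 t ^ q ∂μ) = ∫ t, (t*(1-t)) * |φ t| ^ q ∂μ := by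
      rw [hμ]
      exact setIntegral_congr_fun measurableSet_Ioc e6
    have hw2meas : AEStronglyMeasurable (fun t => (t*(1-t)) * |φ t| ^ q) μ :=
      hc1.aestronglyMeasurable.mul
        (((Real.continuous_rpow_const hq0.le).comp continuous_abs).measurable.comp_aemeasurable
          hφae.aemeasurable).aestronglyMeasurable
    have hw2int : Integrable (fun t => (t*(1-t)) * |φ t| ^ q) μ := by
      apply Integrable.mono' (integrable_const M) hw2meas
      filter_upwards [ae_restrict_mem measurableSet_Ioc] with t ht
      have h1 := hmemt t ht
      have h2 : t*(1-t) ≤ 1 := hmemt1 t ht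
      have h3 : |φ t| ^ q ≤ M := hbound t ⟨ht.1.le, ht.2⟩
      have h4 : 0 ≤ |φ t| ^ q := Real.rpow_nonneg (abs_nonneg _) _
      rw [Real.norm_eq_abs, abs_of_nonneg (by positivity)]
      calc (t*(1-t)) * |φ t| ^ q ≤ (t*(1-t)) * M := mul_le_mul_of_nonneg_left h3 h1
        _ ≤ 1 * M := mul_le_mul_of_nonneg_right h2 hM0
        _ = M := one_mul M
    have hgint : Integrable (fun t : ℝ => (t*(1-t)) * M) μ := by
      apply Integrable.mono' (integrable_const M) ((hc1.mul continuous_const).aestronglyMeasurable)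
      filter_upwards [ae_restrict_mem measurableSet_Ioc] with t ht
      have h1 := hmemt t ht
      have h2 : t*(1-t) ≤ 1 := hmemt1 t ht
      show ‖t*(1-t)*M‖ ≤ M
      rw [Real.norm_eq_abs, abs_of_nonneg (mul_nonneg h1 hM0)]
      calc (t*(1-t)) * M ≤ 1 * M := mul_le_mul_of_nonneg_right h2 hM0
        _ = M := one_mul M
    have hmono : (∫ t, (t*(1-t)) * |φ t| ^ q ∂μ) ≤ ∫ t, (t*(1-t)) * M ∂μ := by
      apply integral_mono_ae hw2int hgint
      filter_upwards [ae_restrict_mem measurableSet_Ioc] with t ht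
      have h1 := hmemt t ht
      have h3 : |φ t| ^ q ≤ M := hbound t ⟨ht.1.le, ht.2⟩
      exact mul_le_mul_of_nonneg_left h3 h1
    have hg6 : (∫ t, (t*(1-t)) * M ∂μ) = M/6 := by
      rw [MeasureTheory.integral_mul_const]
      have h16 : (∫ t, (t*(1-t)) ∂μ) = 1/6 := by
        have : (∫ t, (t*(1-t)) ∂μ) = ∫ t in (0:ℝ)..1, t*(1-t) := by
          rw [intervalIntegral.integral_of_le zero_le_one, hμ]
        rw [this,
          show (fun t : ℝ => t*(1-t)) = fun t : ℝ => t - t^2 from by funext t; ring,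
          intervalIntegral.integral_sub intervalIntegral.intervalIntegrable_id
            (intervalIntegral.intervalIntegrable_pow 2),
          integral_id, integral_pow]
        norm_num
      rw [h16]
      ring
    rw [hstep]
    linarith
  -- final assembly
  have hIq : (∫ t, F2 t ^ q ∂μ) ^ (1/q) ≤ (M/6) ^ (1/q) := by
    apply Real.rpow_le_rpow _ hF2q hq1'.le
    apply MeasureTheory.integral_nonneg_of_ae
    filter_upwards [ae_restrict_mem measurableSet_Ioc] with t ht
    exact Real.rpow_nonneg (mul_nonneg (Real.rpow_nonneg (hmemt t ht) _) (abs_nonneg _)) _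
  have hprod : (∫ t, F1 t * F2 t ∂μ) ≤ (1/(2*((p+1)*(p+3)))) ^ (1/p) * (M/6) ^ (1/q) := by
    refine le_trans holder ?_
    rw [hF1p]
    exact mul_le_mul_of_nonneg_left hIq (Real.rpow_nonneg (by positivity) _)
  have hfinal : |∫ t in (0:ℝ)..1, (-(t^3/6) + t^2/4 - t/12) * φ t|
      ≤ (1/12) * ((1/(2*((p+1)*(p+3)))) ^ (1/p) * (M/6) ^ (1/q)) := by
    refine le_trans habs ?_
    rw [hset, MeasureTheory.integral_const_mul]
    exact mul_le_mul_of_nonneg_left hprod (by norm_num)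
  refine le_trans hfinal (le_of_eq ?_)
  -- constant identity
  have h2X : ((1:ℝ)/(2*((p+1)*(p+3)))) ^ (1/p) = (1/2:ℝ) ^ (1/p) * (1/((p+1)*(p+3))) ^ (1/p) := by
    rw [← Real.mul_rpow (by norm_num) (by positivity)]
    congr 1
    field_simp
  have h6M : (M/6) ^ (1/q) = M ^ (1/q) * (1/6:ℝ) ^ (1/q) := by
    rw [← Real.mul_rpow hM0 (by norm_num)]
    congr 1
    ring
  have h12 : (1/2:ℝ) ^ (1/p) = (1/2) / (1/2:ℝ) ^ (1/q) := by
    rw [hp1q, Real.rpow_sub (by norm_num : (0:ℝ) < 1/2), Real.rpow_one]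
  have h16 : (1/6:ℝ) ^ (1/q) = (1/3:ℝ) ^ (1/q) * (1/2:ℝ) ^ (1/q) := by
    rw [← Real.mul_rpow (by norm_num) (by norm_num)]
    norm_num
  have h3q : (1/3:ℝ) ^ (1/q) = 1 / (3:ℝ) ^ (1/q) := by
    rw [show ((1:ℝ)/3) = (3:ℝ)⁻¹ from by norm_num, Real.inv_rpow (by norm_num)]
    exact (one_div _).symm
  rw [h2X, h6M, h12, h16, h3q]
  have hpos : (0:ℝ) < (1/2:ℝ) ^ (1/q) := Real.rpow_pos_of_pos (by norm_num) _
  have hpos3 : (0:ℝ) < (3:ℝ) ^ (1/q) := Real.rpow_pos_of_pos (by norm_num) _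
  field_simp
  ring


theorem teo32 (A : Set ℝ) (hA : IsOpen A) (η : ℝ → ℝ → ℝ)
    (hinvex : ∀ u ∈ A, ∀ v ∈ A, ∀ t ∈ Icc (0:ℝ) 1, u + t * η v u ∈ A)
    (a b : ℝ) (ha : a ∈ A) (hb : b ∈ A) (hη : η a b ≠ 0) (f : ℝ → ℝ)
    (hf1 : ∀ x ∈ A, DifferentiableAt ℝ f x)
    (hf2 : ∀ x ∈ A, DifferentiableAt ℝ (deriv f) x)
    (hf3 : ∀ x ∈ A, DifferentiableAt ℝ (deriv (deriv f)) x)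
    (hint : IntervalIntegrable (deriv (deriv (deriv f))) volume b (b + η a b))
    (p q : ℝ) (hq : 1 < q) (hpq : 1 / p + 1 / q = 1)
    (hpre : ∀ u ∈ A, ∀ v ∈ A, ∀ t ∈ Icc (0:ℝ) 1,
      |deriv (deriv (deriv f)) (u + t * η v u)| ^ q
        ≤ max (|deriv (deriv (deriv f)) u| ^ q) (|deriv (deriv (deriv f)) v| ^ q)) :
    |(∫ x in b..(b + η a b), f x) - η a b * (f b + f (b + η a b)) / 2
      - ((η a b) ^ 2 / 12) * (deriv f b - deriv f (b + η a b))|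
    ≤ ((η a b) ^ 4 / (24 * (3:ℝ) ^ (1 / q))) *
        (1 / ((p + 1) * (p + 3))) ^ (1 / p) *
        (max (|deriv (deriv (deriv f)) a| ^ q) (|deriv (deriv (deriv f)) b| ^ q))
          ^ (1 / q) := by
  have key := partA A η hinvex a b ha hb hη f hf1 hf2 hf3 hint
  have hφ : IntervalIntegrable (fun t => deriv (deriv (deriv f)) (b + t * η a b)) volume 0 1 := by
    have h1 := (hint.comp_add_left b).comp_mul_left (c := η a b)
    simp only [sub_self, zero_div, add_sub_cancel_left, div_self hη] at h1
    simpa [mul_comm] using h1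
  have hbound : ∀ t ∈ Icc (0:ℝ) 1, |deriv (deriv (deriv f)) (b + t * η a b)| ^ q
      ≤ max (|deriv (deriv (deriv f)) a| ^ q) (|deriv (deriv (deriv f)) b| ^ q) := by
    intro t ht
    exact le_trans (hpre b hb a ha t ht) (le_of_eq (max_comm _ _))
  have hB := partB p q hq hpq (fun t => deriv (deriv (deriv f)) (b + t * η a b)) hφ
    (max (|deriv (deriv (deriv f)) a| ^ q) (|deriv (deriv (deriv f)) b| ^ q)) hbound
  rw [key, abs_mul, abs_of_nonneg (by positivity : (0:ℝ) ≤ (η a b)^4)]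
  calc (η a b)^4 * |∫ t in (0:ℝ)..1,
        (-(t^3/6) + t^2/4 - t/12) * deriv (deriv (deriv f)) (b + t * η a b)|
      ≤ (η a b)^4 * ((1/(24 * (3:ℝ) ^ (1/q))) * (1/((p+1)*(p+3))) ^ (1/p) *
          (max (|deriv (deriv (deriv f)) a| ^ q) (|deriv (deriv (deriv f)) b| ^ q)) ^ (1/q)) :=
        mul_le_mul_of_nonneg_left hB (by positivity)
    _ = _ := by ring
end

section
/- Let A ⊆ ℝ be open and invex with respect to η, a,b ∈ A with η(a,b) ≠ 0, f : A → ℝ three times differentiable, q > 1, 1/p + 1/q = 1, and |f'''|^q prequasiinvex on A. Then |∫_b^{b+η(a,b)} f(x)dx - η(a,b)·(f(b)+f(b+η(a,b)))/2 - (η(a,b)²/12)·(f'(b)-f'(b+η(a,b)))| ≤ (η(a,b)^4/48)·(√π)^(1/p)·(Γ(1+p)/Γ(3/2+p))^(1/p)·(1/(q+1))^(1/q)·(max{|f'''(a)|^q, |f'''(b)|^q})^(1/q). -/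
open MeasureTheory intervalIntegral Set Real

lemma betaReal (p : ℝ) (hp : 0 < p) :
    ∫ x in (0:ℝ)..1, x ^ (-(1/2) : ℝ) * (1-x) ^ p
      = Real.sqrt π * Real.Gamma (1+p) / Real.Gamma (3/2+p) := by
  have h32 : (0:ℝ) < Real.Gamma (3/2+p) := Real.Gamma_pos_of_pos (by linarith)
  have h := Complex.Gamma_mul_Gamma_eq_betaIntegral (s := (1/2 : ℂ)) (t := ((1+p : ℝ) : ℂ))
    (by norm_num) (by simp [Complex.ofReal_re]; linarith)
  have hbeta : Complex.betaIntegral (1/2) ((1+p : ℝ) : ℂ)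
      = ((∫ x in (0:ℝ)..1, x ^ (-(1/2) : ℝ) * (1-x) ^ p : ℝ) : ℂ) := by
    rw [Complex.betaIntegral, ← intervalIntegral.integral_ofReal]
    apply intervalIntegral.integral_congr
    intro x hx
    dsimp only
    rw [Set.uIcc_of_le (by norm_num : (0:ℝ) ≤ 1)] at hx
    obtain ⟨hx0, hx1⟩ := hx
    rcases eq_or_lt_of_le hx0 with h0 | h0
    · simp only [← h0]
      rw [Real.zero_rpow (by norm_num), Complex.ofReal_zero, Complex.zero_cpow (by norm_num)]
      norm_num
    · have e1 : ((x : ℂ)) ^ ((1/2 : ℂ) - 1) = ((x ^ (-(1/2) : ℝ) : ℝ) : ℂ) := by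
        rw [Complex.ofReal_cpow h0.le]
        norm_num
      have e2 : (1 - (x:ℂ)) ^ (((1+p : ℝ) : ℂ) - 1) = (((1-x) ^ p : ℝ) : ℂ) := by
        rw [show (1 - (x:ℂ)) = ((1 - x : ℝ) : ℂ) by push_cast; ring,
          Complex.ofReal_cpow (by linarith)]
        norm_num
      rw [e1, e2]
      push_cast
      ring
  rw [hbeta] at h
  have hsum : (1/2 : ℂ) + ((1+p:ℝ):ℂ) = ((3/2 + p : ℝ) : ℂ) := by push_cast; ring
  rw [hsum, Complex.Gamma_ofReal, Complex.Gamma_ofReal,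
    show (1/2 : ℂ) = ((1/2 : ℝ) : ℂ) by norm_num, Complex.Gamma_ofReal] at h
  have h' : Real.Gamma (1/2) * Real.Gamma (1+p)
      = Real.Gamma (3/2+p) * ∫ x in (0:ℝ)..1, x ^ (-(1/2) : ℝ) * (1-x) ^ p := by
    exact_mod_cast h
  rw [Real.Gamma_one_half_eq] at h'
  rw [eq_div_iff h32.ne']
  linarith [h']

lemma contPow (p : ℝ) (hp : 0 < p) : Continuous (fun u : ℝ => (1-u^2) ^ p) :=
  (continuous_const.sub (continuous_pow 2)).rpow_const (fun x => Or.inr hp.le)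

lemma gIntble (p : ℝ) (hp : 0 < p) :
    IntervalIntegrable (fun s : ℝ => s ^ (-(1/2) : ℝ) * (1-s) ^ p) volume 0 1 := by
  have h1 : IntervalIntegrable (fun s : ℝ => s ^ (-(1/2) : ℝ)) volume 0 1 :=
    intervalIntegral.intervalIntegrable_rpow' (by norm_num)
  exact h1.mul_continuousOn
    ((continuous_const.sub continuous_id).rpow_const (fun x => Or.inr hp.le)).continuousOn

lemma subLe (p : ℝ) (hp : 0 < p) :
    2 * ∫ u in (0:ℝ)..1, (1-u^2) ^ p
      ≤ ∫ s in (0:ℝ)..1, s ^ (-(1/2) : ℝ) * (1-s) ^ p := by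
  set g : ℝ → ℝ := fun s => s ^ (-(1/2) : ℝ) * (1-s) ^ p with hg
  have hgi := gIntble p hp
  refine le_of_forall_pos_le_add (fun ε hε => ?_)
  set δ : ℝ := min (ε/2) 1 with hδdef
  have hδ0 : 0 < δ := lt_min (by linarith) one_pos
  have hδ1 : δ ≤ 1 := min_le_right _ _
  have hcont := contPow p hp
  -- split
  have hsplit : (∫ u in (0:ℝ)..δ, (1-u^2) ^ p) + (∫ u in δ..1, (1-u^2) ^ p)
      = ∫ u in (0:ℝ)..1, (1-u^2) ^ p :=
    intervalIntegral.integral_add_adjacent_intervals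
      (hcont.intervalIntegrable _ _) (hcont.intervalIntegrable _ _)
  have hb1 : (∫ u in (0:ℝ)..δ, (1-u^2) ^ p) ≤ δ := by
    have : (∫ u in (0:ℝ)..δ, (1-u^2) ^ p) ≤ ∫ u in (0:ℝ)..δ, (1:ℝ) := by
      apply intervalIntegral.integral_mono_on hδ0.le (hcont.intervalIntegrable _ _)
        (intervalIntegrable_const)
      intro u hu
      have h0 : 0 ≤ 1 - u^2 := by nlinarith [hu.1, hu.2, hδ1]
      have h1 : 1 - u^2 ≤ 1 := by nlinarith [hu.1]
      calc (1-u^2) ^ p ≤ 1 ^ p := Real.rpow_le_rpow h0 h1 hp.le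
        _ = 1 := Real.one_rpow p
    simpa using this
  -- substitution on [δ, 1]
  have hgcont : ContinuousOn g {s : ℝ | 0 < s} := by
    apply ContinuousOn.mul
    · intro s hs
      exact (Real.continuousAt_rpow_const s _ (Or.inl (ne_of_gt hs))).continuousWithinAt
    · exact ((continuous_const.sub continuous_id).rpow_const
        (fun x => Or.inr hp.le)).continuousOn
  have hsub : (∫ u in δ..1, (2*u) • g (u^2)) = ∫ s in (δ^2)..1, g s := by
    have h := intervalIntegral.integral_comp_smul_deriv' (a := δ) (b := 1)
      (f := fun u : ℝ => u^2) (f' := fun u : ℝ => 2*u) (g := g)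
      (fun x _ => by simpa using (hasDerivAt_pow 2 x))
      (continuous_const.mul continuous_id).continuousOn
      (hgcont.mono ?_)
    · simpa using h
    · rintro s ⟨u, hu, rfl⟩
      rw [Set.uIcc_of_le hδ1] at hu
      have : 0 < u := lt_of_lt_of_le hδ0 hu.1
      exact pow_pos this 2
  have heq : (∫ u in δ..1, (2*u) • g (u^2)) = ∫ u in δ..1, 2 * (1-u^2) ^ p := by
    apply intervalIntegral.integral_congr
    intro u hu
    rw [Set.uIcc_of_le hδ1] at hu
    have hu0 : 0 < u := lt_of_lt_of_le hδ0 hu.1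
    have e : (u^2 : ℝ) ^ (-(1/2) : ℝ) = u⁻¹ := by
      rw [← Real.rpow_natCast u 2, ← Real.rpow_mul hu0.le]
      norm_num
      exact Real.rpow_neg_one u
    simp only [hg, smul_eq_mul, e]
    field_simp
  have h2 : 2 * (∫ u in δ..1, (1-u^2) ^ p) = ∫ s in (δ^2)..1, g s := by
    rw [← hsub, heq, intervalIntegral.integral_const_mul]
  have hδ21 : δ^2 ≤ 1 := by nlinarith
  have htail : (∫ s in (δ^2)..1, g s) ≤ ∫ s in (0:ℝ)..1, g s := by
    have hsplit2 : (∫ s in (0:ℝ)..(δ^2), g s) + (∫ s in (δ^2)..1, g s)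
        = ∫ s in (0:ℝ)..1, g s :=
      intervalIntegral.integral_add_adjacent_intervals
        (hgi.mono_set (by rw [Set.uIcc_of_le (by positivity : (0:ℝ) ≤ δ^2),
          Set.uIcc_of_le (by norm_num : (0:ℝ) ≤ 1)]; exact Set.Icc_subset_Icc le_rfl hδ21))
        (hgi.mono_set (by rw [Set.uIcc_of_le hδ21,
          Set.uIcc_of_le (by norm_num : (0:ℝ) ≤ 1)]; exact Set.Icc_subset_Icc (by positivity) le_rfl))
    have hnn : 0 ≤ ∫ s in (0:ℝ)..(δ^2), g s := by
      apply intervalIntegral.integral_nonneg (by positivity)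
      intro s hs
      have hs0 : (0:ℝ) ≤ s := hs.1
      have hs1 : s ≤ 1 := le_trans hs.2 hδ21
      have : (0:ℝ) ≤ 1 - s := by linarith
      positivity
    linarith
  have key : 2 * (∫ u in (0:ℝ)..1, (1-u^2) ^ p)
      = 2 * (∫ u in (0:ℝ)..δ, (1-u^2) ^ p) + 2 * (∫ u in δ..1, (1-u^2) ^ p) := by
    linarith
  have : (2:ℝ) * δ ≤ ε := by
    have := min_le_left (ε/2) 1
    simp only [hδdef]
    linarith [this]
  calc 2 * (∫ u in (0:ℝ)..1, (1-u^2) ^ p)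
      ≤ 2 * δ + ∫ s in (δ^2)..1, g s := by linarith
    _ ≤ (∫ s in (0:ℝ)..1, g s) + ε := by linarith

lemma phiBound (p : ℝ) (hp : 0 < p) :
    ∫ t in (0:ℝ)..1, (t*(1-t)) ^ p
      ≤ (4:ℝ) ^ (-p) * (Real.sqrt π * Real.Gamma (1+p) / Real.Gamma (3/2+p)) := by
  have hB : 0 ≤ Real.sqrt π * Real.Gamma (1+p) / Real.Gamma (3/2+p) := by
    have h1 := Real.Gamma_pos_of_pos (show (0:ℝ) < 1+p by linarith)
    have h2 := Real.Gamma_pos_of_pos (show (0:ℝ) < 3/2+p by linarith)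
    positivity
  have e1 : ∫ t in (0:ℝ)..1, (t*(1-t)) ^ p
      = (4:ℝ) ^ (-p) * ∫ t in (0:ℝ)..1, (1-(2*t-1)^2) ^ p := by
    rw [← intervalIntegral.integral_const_mul]
    apply intervalIntegral.integral_congr
    intro t ht
    dsimp only
    rw [Set.uIcc_of_le (by norm_num : (0:ℝ) ≤ 1)] at ht
    have h0 : (0:ℝ) ≤ t * (1-t) := mul_nonneg ht.1 (by linarith [ht.2])
    have e : (1-(2*t-1)^2 : ℝ) = 4 * (t * (1-t)) := by ring
    rw [e, Real.mul_rpow (by norm_num) h0, ← mul_assoc,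
      ← Real.rpow_add (by norm_num : (0:ℝ) < 4)]
    norm_num
  have e2 : (2:ℝ) • ∫ t in (0:ℝ)..1, (1-(2*t-1)^2) ^ p
      = ∫ u in (-1:ℝ)..1, (1-u^2) ^ p := by
    have := intervalIntegral.smul_integral_comp_mul_sub
      (f := fun u : ℝ => (1-u^2) ^ p) (a := (0:ℝ)) (b := 1) 2 1
    norm_num at this
    convert this using 2
    rw [smul_eq_mul]
  have e3 : ∫ u in (-1:ℝ)..1, (1-u^2) ^ p = 2 * ∫ u in (0:ℝ)..1, (1-u^2) ^ p := by
    have hsp : (∫ u in (-1:ℝ)..0, (1-u^2) ^ p) + (∫ u in (0:ℝ)..1, (1-u^2) ^ p)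
        = ∫ u in (-1:ℝ)..1, (1-u^2) ^ p :=
      intervalIntegral.integral_add_adjacent_intervals
        ((contPow p hp).intervalIntegrable _ _) ((contPow p hp).intervalIntegrable _ _)
    have hneg : (∫ u in (-1:ℝ)..0, (1-u^2) ^ p) = ∫ u in (0:ℝ)..1, (1-u^2) ^ p := by
      have := intervalIntegral.integral_comp_neg (a := (0:ℝ)) (b := 1)
        (f := fun u : ℝ => (1-u^2) ^ p)
      simp only [neg_sq] at this
      rw [this]
      norm_num
    linarith
  have hhalf : ∫ t in (0:ℝ)..1, (1-(2*t-1)^2) ^ p = ∫ u in (0:ℝ)..1, (1-u^2) ^ p := by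
    have := e2
    rw [e3] at this
    simp only [smul_eq_mul] at this
    linarith
  rw [e1, hhalf]
  have hle : ∫ u in (0:ℝ)..1, (1-u^2) ^ p
      ≤ Real.sqrt π * Real.Gamma (1+p) / Real.Gamma (3/2+p) := by
    have h1 := subLe p hp
    rw [betaReal p hp] at h1
    have h2 : 0 ≤ ∫ u in (0:ℝ)..1, (1-u^2) ^ p := by
      apply intervalIntegral.integral_nonneg (by norm_num)
      intro u hu
      have : (0:ℝ) ≤ 1 - u^2 := by nlinarith [hu.1, hu.2]
      positivity
    linarith
  have h4 : (0:ℝ) ≤ (4:ℝ) ^ (-p) := Real.rpow_nonneg (by norm_num) _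
  exact mul_le_mul_of_nonneg_left hle h4

lemma absLinCont (q : ℝ) (hq : 0 < q) : Continuous (fun t : ℝ => |1-2*t| ^ q) :=
  (continuous_const.sub (continuous_const.mul continuous_id)).abs.rpow_const
    (fun _ => Or.inr hq.le)

lemma rpowInt (q : ℝ) (hq : 0 < q) : ∫ x in (0:ℝ)..1, x ^ q = 1/(q+1) := by
  rw [integral_rpow (Or.inl (by linarith))]
  rw [Real.zero_rpow (by linarith), Real.one_rpow]
  norm_num

lemma absLin (q : ℝ) (hq : 0 < q) : ∫ t in (0:ℝ)..1, |1-2*t| ^ q = 1/(q+1) := by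
  have hcont := absLinCont q hq
  have hsplit : (∫ t in (0:ℝ)..(1/2), |1-2*t| ^ q) + (∫ t in (1/2:ℝ)..1, |1-2*t| ^ q)
      = ∫ t in (0:ℝ)..1, |1-2*t| ^ q :=
    intervalIntegral.integral_add_adjacent_intervals
      (hcont.intervalIntegrable _ _) (hcont.intervalIntegrable _ _)
  have h1 : (∫ t in (0:ℝ)..(1/2), |1-2*t| ^ q) = 1/(2*(q+1)) := by
    have e : (∫ t in (0:ℝ)..(1/2), |1-2*t| ^ q) = ∫ t in (0:ℝ)..(1/2), (1-2*t) ^ q := by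
      apply intervalIntegral.integral_congr
      intro t ht
      rw [Set.uIcc_of_le (by norm_num : (0:ℝ) ≤ 1/2)] at ht
      dsimp only
      rw [abs_of_nonneg (by linarith [ht.2])]
    rw [e]
    have := intervalIntegral.integral_comp_sub_mul (f := fun x : ℝ => x ^ q)
      (a := (0:ℝ)) (b := 1/2) (by norm_num : (2:ℝ) ≠ 0) 1
    norm_num at this
    rw [this, rpowInt q hq]
    norm_num
    ring
  have h2 : (∫ t in (1/2:ℝ)..1, |1-2*t| ^ q) = 1/(2*(q+1)) := by
    have e : (∫ t in (1/2:ℝ)..1, |1-2*t| ^ q) = ∫ t in (1/2:ℝ)..1, (2*t-1) ^ q := by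
      apply intervalIntegral.integral_congr
      intro t ht
      rw [Set.uIcc_of_le (by norm_num : (1/2:ℝ) ≤ 1)] at ht
      dsimp only
      rw [abs_of_nonpos (by linarith [ht.1])]
      ring_nf
    rw [e]
    have := intervalIntegral.integral_comp_mul_sub (f := fun x : ℝ => x ^ q)
      (a := (1/2:ℝ)) (b := 1) (by norm_num : (2:ℝ) ≠ 0) 1
    norm_num at this
    rw [this, rpowInt q hq]
    norm_num
    ring
  rw [← hsplit, h1, h2]
  have : q + 1 ≠ 0 := by linarith
  field_simp
  norm_num

lemma parts_identity (b c : ℝ) (f : ℝ → ℝ)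
    (h1 : ∀ x ∈ Set.uIcc b c, HasDerivAt f (deriv f x) x)
    (h2 : ∀ x ∈ Set.uIcc b c, HasDerivAt (deriv f) (deriv (deriv f) x) x)
    (h3 : ∀ x ∈ Set.uIcc b c, HasDerivAt (deriv (deriv f)) (deriv (deriv (deriv f)) x) x)
    (hint : IntervalIntegrable (deriv (deriv (deriv f))) volume b c) :
    (∫ x in b..c, f x) - (c-b) * (f b + f c)/2 - ((c-b)^2/12) * (deriv f b - deriv f c)
      = -(1/12) * ∫ x in b..c, ((x-b)*(c-x)*(b+c-2*x)) * deriv (deriv (deriv f)) x := by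
  have hKd : ∀ x : ℝ, HasDerivAt (fun y => (y-b)*(c-y)*(b+c-2*y))
      (6*x^2 - 6*(b+c)*x + ((b+c)^2 + 2*b*c)) x := by
    intro x
    have h := (((hasDerivAt_id x).sub_const b).mul ((hasDerivAt_id x).const_sub c)).mul
      (((hasDerivAt_id x).const_mul (2:ℝ)).const_sub (b+c))
    exact h.congr_deriv (by simp only [id_eq, Pi.mul_apply]; ring)
  have hK1d : ∀ x : ℝ, HasDerivAt (fun y => 6*y^2 - 6*(b+c)*y + ((b+c)^2 + 2*b*c))
      (12*x - 6*(b+c)) x := by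
    intro x
    have h := (((hasDerivAt_pow 2 x).const_mul (6:ℝ)).sub
      ((hasDerivAt_id x).const_mul (6*(b+c)))).add_const ((b+c)^2 + 2*b*c)
    exact h.congr_deriv (by push_cast; ring)
  have hK2d : ∀ x : ℝ, HasDerivAt (fun y => 12*y - 6*(b+c)) (12:ℝ) x := by
    intro x
    have h := ((hasDerivAt_id x).const_mul (12:ℝ)).sub_const (6*(b+c))
    exact h.congr_deriv (by ring)
  have hcont1 : ContinuousOn (deriv f) (Set.uIcc b c) :=
    fun x hx => (h2 x hx).continuousAt.continuousWithinAt
  have hcont2 : ContinuousOn (deriv (deriv f)) (Set.uIcc b c) :=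
    fun x hx => (h3 x hx).continuousAt.continuousWithinAt
  have hcont0 : ContinuousOn f (Set.uIcc b c) :=
    fun x hx => (h1 x hx).continuousAt.continuousWithinAt
  have e1 := intervalIntegral.integral_mul_deriv_eq_deriv_mul (a := b) (b := c)
    (u := fun y => (y-b)*(c-y)*(b+c-2*y)) (v := deriv (deriv f))
    (u' := fun x => 6*x^2 - 6*(b+c)*x + ((b+c)^2 + 2*b*c)) (v' := deriv (deriv (deriv f)))
    (fun x _ => hKd x) h3
    (Continuous.intervalIntegrable (by continuity) _ _) hint
  have e2 := intervalIntegral.integral_mul_deriv_eq_deriv_mul (a := b) (b := c)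
    (u := fun y => 6*y^2 - 6*(b+c)*y + ((b+c)^2 + 2*b*c)) (v := deriv f)
    (u' := fun x => 12*x - 6*(b+c)) (v' := deriv (deriv f))
    (fun x _ => hK1d x) h2
    (Continuous.intervalIntegrable (by continuity) _ _)
    (hcont2.intervalIntegrable)
  have e3 := intervalIntegral.integral_mul_deriv_eq_deriv_mul (a := b) (b := c)
    (u := fun y => 12*y - 6*(b+c)) (v := f)
    (u' := fun _ => (12:ℝ)) (v' := deriv f)
    (fun x _ => hK2d x) h1
    (Continuous.intervalIntegrable (by continuity) _ _)
    (hcont1.intervalIntegrable)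
  have e4 : (∫ x in b..c, (fun _ => (12:ℝ)) x * f x) = 12 * ∫ x in b..c, f x := by
    simpa using intervalIntegral.integral_const_mul (12:ℝ) f (a := b) (b := c)
  rw [e2, e3] at e1
  rw [e4] at e1
  rw [e1]
  ring

set_option maxHeartbeats 2000000 in
theorem teo33 (A : Set ℝ) (hA : IsOpen A) (η : ℝ → ℝ → ℝ)
    (hinvex : ∀ u ∈ A, ∀ v ∈ A, ∀ t ∈ Icc (0:ℝ) 1, u + t * η v u ∈ A)
    (a b : ℝ) (ha : a ∈ A) (hb : b ∈ A) (hη : η a b ≠ 0) (f : ℝ → ℝ)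
    (hf1 : ∀ x ∈ A, DifferentiableAt ℝ f x)
    (hf2 : ∀ x ∈ A, DifferentiableAt ℝ (deriv f) x)
    (hf3 : ∀ x ∈ A, DifferentiableAt ℝ (deriv (deriv f)) x)
    (hint : IntervalIntegrable (deriv (deriv (deriv f))) volume b (b + η a b))
    (p q : ℝ) (hq : 1 < q) (hpq : 1 / p + 1 / q = 1)
    (hpre : ∀ u ∈ A, ∀ v ∈ A, ∀ t ∈ Icc (0:ℝ) 1,
      |deriv (deriv (deriv f)) (u + t * η v u)| ^ q
        ≤ max (|deriv (deriv (deriv f)) u| ^ q) (|deriv (deriv (deriv f)) v| ^ q)) :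
    |(∫ x in b..(b + η a b), f x) - η a b * (f b + f (b + η a b)) / 2
      - ((η a b) ^ 2 / 12) * (deriv f b - deriv f (b + η a b))|
    ≤ ((η a b) ^ 4 / 48) * (Real.sqrt π) ^ (1 / p) *
        (Real.Gamma (1 + p) / Real.Gamma (3 / 2 + p)) ^ (1 / p) *
        (1 / (q + 1)) ^ (1 / q) *
        (max (|deriv (deriv (deriv f)) a| ^ q) (|deriv (deriv (deriv f)) b| ^ q))
          ^ (1 / q) := by
  have hq0 : (0:ℝ) < q := lt_trans one_pos hq
  have h1q_pos : 0 < 1/q := by positivity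
  have h1q_lt : 1/q < 1 := by rw [div_lt_one hq0]; exact hq
  have h1p_pos : 0 < 1/p := by linarith
  have hp0 : 0 < p := one_div_pos.mp h1p_pos
  have hp1 : 1 < p := (div_lt_one hp0).mp (by linarith)
  have hconj : p.HolderConjugate q := Real.holderConjugate_iff.mpr ⟨hp1, by rw [← one_div, ← one_div]; exact hpq⟩
  set e : ℝ := η a b with he
  set D : ℝ → ℝ := deriv (deriv (deriv f)) with hDdef
  set M : ℝ := max (|D a| ^ q) (|D b| ^ q) with hM
  have hM0 : 0 ≤ M := le_max_of_le_left (Real.rpow_nonneg (abs_nonneg _) q)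
  -- path inside A
  have hsubA : Set.uIcc b (b + e) ⊆ A := by
    intro x hx
    have hx' : b + ((x - b)/e) * e ∈ A := by
      apply hinvex b hb a ha
      rcases lt_or_gt_of_ne hη with hneg | hpos
      · rw [Set.uIcc_of_ge (by linarith : b + e ≤ b)] at hx
        constructor
        · exact div_nonneg_of_nonpos (by linarith [hx.2]) hneg.le
        · rw [div_le_one_of_neg hneg]
          linarith [hx.1]
      · rw [Set.uIcc_of_le (by linarith : b ≤ b + e)] at hx
        constructor
        · exact div_nonneg (by linarith [hx.1]) hpos.le
        · rw [div_le_one hpos]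
          linarith [hx.2]
    have : b + ((x - b)/e) * e = x := by field_simp; ring
    rwa [this] at hx'
  have d1 : ∀ x ∈ Set.uIcc b (b+e), HasDerivAt f (deriv f x) x :=
    fun x hx => (hf1 x (hsubA hx)).hasDerivAt
  have d2 : ∀ x ∈ Set.uIcc b (b+e), HasDerivAt (deriv f) (deriv (deriv f) x) x :=
    fun x hx => (hf2 x (hsubA hx)).hasDerivAt
  have d3 : ∀ x ∈ Set.uIcc b (b+e), HasDerivAt (deriv (deriv f)) (D x) x :=
    fun x hx => (hf3 x (hsubA hx)).hasDerivAt
  have ident := parts_identity b (b+e) f d1 d2 d3 hint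
  simp only [add_sub_cancel_left] at ident
  -- change of variables
  have hcomp := intervalIntegral.integral_comp_mul_add
    (f := fun x => (x-b)*((b+e)-x)*(b+(b+e)-2*x) * D x) (a := (0:ℝ)) (b := 1) (c := e) hη b
  simp only [mul_zero, zero_add, mul_one] at hcomp
  rw [add_comm e b] at hcomp
  set J : ℝ := ∫ t in (0:ℝ)..1,
    (fun x => (x-b)*((b+e)-x)*(b+(b+e)-2*x) * D x) (e * t + b) with hJdef
  have hIJ : (∫ x in b..(b+e), (x-b)*((b+e)-x)*(b+(b+e)-2*x) * D x) = e * J := by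
    rw [hcomp, smul_eq_mul, ← mul_assoc, mul_inv_cancel₀ hη, one_mul]
  -- pointwise bound data
  have hDb : ∀ t ∈ Icc (0:ℝ) 1, |D (e*t+b)| ^ q ≤ M := by
    intro t ht
    have h1 := hpre b hb a ha t ht
    rw [max_comm] at h1
    have harg : b + t * η a b = e*t+b := by rw [← he]; ring
    rw [harg] at h1
    exact h1
  have hDb' : ∀ t ∈ Icc (0:ℝ) 1, |D (e*t+b)| ≤ M ^ (1/q) := by
    intro t ht
    have h2 : |D (e*t+b)| = (|D (e*t+b)| ^ q) ^ (1/q) := by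
      rw [← Real.rpow_mul (abs_nonneg _), mul_one_div, div_self hq0.ne', Real.rpow_one]
    rw [h2]
    exact Real.rpow_le_rpow (Real.rpow_nonneg (abs_nonneg _) q) (hDb t ht) (by positivity)
  -- measurability
  have hDm : Measurable D := by rw [hDdef]; exact measurable_deriv _
  have hψm : Measurable (fun t : ℝ => |1-2*t| * |D (e*t+b)|) := by
    apply Measurable.mul
    · exact (continuous_const.sub (continuous_const.mul continuous_id)).abs.measurable
    · exact continuous_abs.measurable.comp (hDm.comp ((measurable_id.const_mul e).add_const b))
  haveI : IsFiniteMeasure (volume.restrict (Ioc (0:ℝ) 1)) := by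
    constructor
    rw [Measure.restrict_apply_univ]
    simp [Real.volume_Ioc]
  -- Memℒp facts
  have hφmem : MemLp (fun t : ℝ => t*(1-t)) (ENNReal.ofReal p)
      (volume.restrict (Ioc (0:ℝ) 1)) := by
    apply MemLp.of_bound (C := 1)
      ((by continuity : Continuous fun t : ℝ => t*(1-t)).aestronglyMeasurable)
    filter_upwards [ae_restrict_mem measurableSet_Ioc] with t ht
    rw [Real.norm_eq_abs, abs_of_nonneg (mul_nonneg ht.1.le (by linarith [ht.2]))]
    nlinarith [ht.1.le, ht.2]
  have hψmem : MemLp (fun t : ℝ => |1-2*t| * |D (e*t+b)|) (ENNReal.ofReal q)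
      (volume.restrict (Ioc (0:ℝ) 1)) := by
    apply MemLp.of_bound (C := M ^ (1/q)) hψm.aestronglyMeasurable
    filter_upwards [ae_restrict_mem measurableSet_Ioc] with t ht
    rw [Real.norm_eq_abs, abs_of_nonneg (mul_nonneg (abs_nonneg _) (abs_nonneg _))]
    have h1 : |1-2*t| ≤ 1 := by
      rw [abs_le]; constructor <;> [linarith [ht.2]; linarith [ht.1.le]]
    calc |1-2*t| * |D (e*t+b)| ≤ 1 * (M ^ (1/q)) :=
          mul_le_mul h1 (hDb' t ⟨ht.1.le, ht.2⟩) (abs_nonneg _) one_pos.le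
      _ = M ^ (1/q) := one_mul _
  -- Hölder
  have hHol := MeasureTheory.integral_mul_le_Lp_mul_Lq_of_nonneg
    (μ := volume.restrict (Ioc (0:ℝ) 1)) hconj
    (f := fun t : ℝ => t*(1-t)) (g := fun t : ℝ => |1-2*t| * |D (e*t+b)|)
    ?_ ?_ hφmem hψmem
  rotate_left
  · filter_upwards [ae_restrict_mem measurableSet_Ioc] with t ht
    exact mul_nonneg ht.1.le (by linarith [ht.2])
  · exact Filter.Eventually.of_forall fun t => mul_nonneg (abs_nonneg _) (abs_nonneg _)
  -- bound ∫ φ^p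
  have hGpos : (0:ℝ) < Real.Gamma (3/2+p) := Real.Gamma_pos_of_pos (by linarith)
  have hGpos1 : (0:ℝ) < Real.Gamma (1+p) := Real.Gamma_pos_of_pos (by linarith)
  have hXnn : 0 ≤ ∫ t in Ioc (0:ℝ) 1, (t*(1-t)) ^ p := by
    apply setIntegral_nonneg measurableSet_Ioc
    intro t ht
    exact Real.rpow_nonneg (mul_nonneg ht.1.le (by linarith [ht.2])) p
  have hX : (∫ t in Ioc (0:ℝ) 1, (t*(1-t)) ^ p)
      ≤ (4:ℝ) ^ (-p) * (Real.sqrt π * Real.Gamma (1+p) / Real.Gamma (3/2+p)) := by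
    rw [← intervalIntegral.integral_of_le (by norm_num : (0:ℝ) ≤ 1)]
    exact phiBound p hp0
  have hXb : (∫ t in Ioc (0:ℝ) 1, (t*(1-t)) ^ p) ^ (1/p)
      ≤ (1/4) * ((Real.sqrt π) ^ (1/p) * (Real.Gamma (1+p) / Real.Gamma (3/2+p)) ^ (1/p)) := by
    have h1 : (∫ t in Ioc (0:ℝ) 1, (t*(1-t)) ^ p) ^ (1/p)
        ≤ ((4:ℝ) ^ (-p) * (Real.sqrt π * Real.Gamma (1+p) / Real.Gamma (3/2+p))) ^ (1/p) :=
      Real.rpow_le_rpow hXnn hX (by positivity)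
    have h2 : ((4:ℝ) ^ (-p) * (Real.sqrt π * Real.Gamma (1+p) / Real.Gamma (3/2+p))) ^ (1/p)
        = (1/4) * ((Real.sqrt π) ^ (1/p) * (Real.Gamma (1+p) / Real.Gamma (3/2+p)) ^ (1/p)) := by
      rw [Real.mul_rpow (Real.rpow_nonneg (by norm_num) _) (by positivity),
        ← Real.rpow_mul (by norm_num : (0:ℝ) ≤ 4), mul_div_assoc,
        Real.mul_rpow (Real.sqrt_nonneg _) (by positivity)]
      congr 1
      rw [show -p * (1/p) = -1 by field_simp, Real.rpow_neg_one]
      norm_num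
    rw [h2] at h1
    exact h1
  -- bound ∫ ψ^q
  have hψqm : Measurable (fun t : ℝ => (|1-2*t| * |D (e*t+b)|) ^ q) :=
    (continuous_id.rpow_const (fun _ => Or.inr hq0.le)).measurable.comp hψm
  have hYnn : 0 ≤ ∫ t in Ioc (0:ℝ) 1, (|1-2*t| * |D (e*t+b)|) ^ q := by
    apply setIntegral_nonneg measurableSet_Ioc
    intro t ht
    exact Real.rpow_nonneg (mul_nonneg (abs_nonneg _) (abs_nonneg _)) q
  have hY : (∫ t in Ioc (0:ℝ) 1, (|1-2*t| * |D (e*t+b)|) ^ q) ≤ (1/(q+1)) * M := by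
    have hle : ∀ t ∈ Ioc (0:ℝ) 1, (|1-2*t| * |D (e*t+b)|) ^ q ≤ |1-2*t| ^ q * M := by
      intro t ht
      rw [Real.mul_rpow (abs_nonneg _) (abs_nonneg _)]
      exact mul_le_mul_of_nonneg_left (hDb t ⟨ht.1.le, ht.2⟩)
        (Real.rpow_nonneg (abs_nonneg _) q)
    have hint1 : IntegrableOn (fun t : ℝ => (|1-2*t| * |D (e*t+b)|) ^ q) (Ioc 0 1) volume := by
      apply Integrable.mono' (integrable_const M) hψqm.aestronglyMeasurable
      filter_upwards [ae_restrict_mem measurableSet_Ioc] with t ht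
      rw [Real.norm_eq_abs,
        abs_of_nonneg (Real.rpow_nonneg (mul_nonneg (abs_nonneg _) (abs_nonneg _)) q)]
      calc (|1-2*t| * |D (e*t+b)|) ^ q ≤ |1-2*t| ^ q * M := hle t ht
        _ ≤ 1 * M := by
            apply mul_le_mul_of_nonneg_right _ hM0
            have h1 : |1-2*t| ≤ 1 := by
              rw [abs_le]; constructor <;> [linarith [ht.2]; linarith [ht.1.le]]
            calc |1-2*t| ^ q ≤ 1 ^ q := Real.rpow_le_rpow (abs_nonneg _) h1 hq0.le
              _ = 1 := Real.one_rpow q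
        _ = M := one_mul M
    have hint2 : IntegrableOn (fun t : ℝ => |1-2*t| ^ q * M) (Ioc 0 1) volume :=
      (((absLinCont q hq0).mul continuous_const)).integrableOn_Ioc
    have hmono := setIntegral_mono_on hint1 hint2 measurableSet_Ioc hle
    have hcomp2 : (∫ t in Ioc (0:ℝ) 1, |1-2*t| ^ q * M) = (1/(q+1)) * M := by
      rw [MeasureTheory.integral_mul_const, ← intervalIntegral.integral_of_le
        (by norm_num : (0:ℝ) ≤ 1), absLin q hq0]
    linarith [hmono, hcomp2.le, hcomp2.ge]
  have hYb : (∫ t in Ioc (0:ℝ) 1, (|1-2*t| * |D (e*t+b)|) ^ q) ^ (1/q)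
      ≤ (1/(q+1)) ^ (1/q) * M ^ (1/q) := by
    have h1 := Real.rpow_le_rpow hYnn hY (by positivity : (0:ℝ) ≤ 1/q)
    rwa [Real.mul_rpow (by positivity) hM0] at h1
  -- assemble
  have hJabs := intervalIntegral.abs_integral_le_integral_abs (μ := volume)
    (f := fun t : ℝ => (fun x : ℝ => (x-b)*((b+e)-x)*(b+(b+e)-2*x) * D x) (e * t + b))
    (by norm_num : (0:ℝ) ≤ 1)
  rw [← hJdef] at hJabs
  have hstep : (∫ t in (0:ℝ)..1,
        |(fun x : ℝ => (x-b)*((b+e)-x)*(b+(b+e)-2*x) * D x) (e * t + b)|)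
      = |e|^3 * ∫ t in Ioc (0:ℝ) 1, (t*(1-t)) * (|1-2*t| * |D (e*t+b)|) := by
    rw [← intervalIntegral.integral_of_le (by norm_num : (0:ℝ) ≤ 1),
      ← intervalIntegral.integral_const_mul]
    apply intervalIntegral.integral_congr
    intro t ht
    rw [Set.uIcc_of_le (by norm_num : (0:ℝ) ≤ 1)] at ht
    dsimp only
    rw [show (e*t+b-b)*((b+e)-(e*t+b))*(b+(b+e)-2*(e*t+b)) * D (e*t+b)
        = (e^3*(t*(1-t)*(1-2*t))) * D (e*t+b) from by ring]
    rw [abs_mul, abs_mul, abs_pow, abs_mul,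
      abs_of_nonneg (mul_nonneg ht.1 (by linarith [ht.2]))]
    ring
  have hW : (∫ t in Ioc (0:ℝ) 1, (t*(1-t)) * (|1-2*t| * |D (e*t+b)|))
      ≤ ((1/4) * ((Real.sqrt π) ^ (1/p) * (Real.Gamma (1+p) / Real.Gamma (3/2+p)) ^ (1/p)))
        * ((1/(q+1)) ^ (1/q) * M ^ (1/q)) := by
    refine le_trans hHol ?_
    apply mul_le_mul hXb hYb (Real.rpow_nonneg hYnn _) (by positivity)
  have hJ2 : |J| ≤ |e|^3 * (((1/4) * ((Real.sqrt π) ^ (1/p)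
      * (Real.Gamma (1+p) / Real.Gamma (3/2+p)) ^ (1/p)))
        * ((1/(q+1)) ^ (1/q) * M ^ (1/q))) := by
    refine le_trans hJabs ?_
    rw [hstep]
    exact mul_le_mul_of_nonneg_left hW (by positivity)
  have habs4 : |e|^4 = e^4 := by
    rw [pow_abs]
    exact abs_of_nonneg (by positivity)
  rw [← hDdef] at ident
  rw [ident, hIJ, abs_mul, abs_mul, show |(-(1/12):ℝ)| = 1/12 from by norm_num]
  calc (1:ℝ)/12 * (|e| * |J|)
      ≤ 1/12 * (|e| * (|e|^3 * (((1/4) * ((Real.sqrt π) ^ (1/p)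
        * (Real.Gamma (1+p) / Real.Gamma (3/2+p)) ^ (1/p)))
          * ((1/(q+1)) ^ (1/q) * M ^ (1/q))))) := by
        apply mul_le_mul_of_nonneg_left _ (by norm_num)
        exact mul_le_mul_of_nonneg_left hJ2 (abs_nonneg _)
    _ = (e ^ 4 / 48) * (Real.sqrt π) ^ (1 / p) *
        (Real.Gamma (1 + p) / Real.Gamma (3 / 2 + p)) ^ (1 / p) *
        (1 / (q + 1)) ^ (1 / q) * M ^ (1 / q) := by
        rw [← habs4]; ring
end
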